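/- arXiv:1604.03002 — 7 statements merged into one kernel-verified Lean document; each statement's English description precedes it below -/
import Mathlib

section
/- Let r ≥ 3 and let G be a balanced r-partite graph with vertex classes V_1, ..., V_r each of size n, satisfying δ*(G) > (1 − 1/(r−1))·n. Then for any vertices u, v ∈ V(G) there exist copies K and K' of the complete graph K_r in G such that u ∈ V(K), v ∈ V(K'), and V(K) ∩ V(K') ≠ ∅. -/
/-!
Every vertex misses fewer than `n / (r - 1)` vertices of each other class, so by the union bound
any fewer than `r` vertices outside a class have a common neighbour in it. Consequently every
clique meeting each class at most once extends greedily, one class at a time, to a copy of `K_r`.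
Given `u` and `v`, pick a third class `j` and a common neighbour `y` of `u` and `v` in it; the
edges `u y` and `v y` extend to two copies of `K_r` that share `y`.
-/

/-- `f` picks out a copy of `K_r` in a balanced `r`-partite graph `G` on
`Fin r × Fin n` (one vertex `(i, f i)` in each vertex class). -/
def IsKr {r n : ℕ} (G : SimpleGraph (Fin r × Fin n)) (f : Fin r → Fin n) : Prop :=
  ∀ i j : Fin r, i ≠ j → G.Adj (i, f i) (j, f j)

open Finset

theorem Finset.exists_forall_of_sum_card_filter_not_lt {ι α : Type*} [Fintype α]
    (F : Finset ι) (p : ι → α → Prop) [∀ w, DecidablePred (p w)]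
    (h : ∑ w ∈ F, #{y | ¬p w y} < Fintype.card α) : ∃ y, ∀ w ∈ F, p w y := by
  classical
  by_contra! hcover
  have : univ ⊆ F.biUnion fun w => {y | ¬p w y} := fun y _ => by
    obtain ⟨w, hw, hy⟩ := hcover y
    exact mem_biUnion.2 ⟨w, hw, mem_filter.2 ⟨mem_univ y, hy⟩⟩
  have := (card_le_card this).trans card_biUnion_le
  rw [card_univ] at this
  omega

section

variable {r n : ℕ} (G : SimpleGraph (Fin r × Fin n))

theorem card_filter_not_adj_mul_lt [DecidableRel G.Adj] (hr : 2 ≤ r)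
    {u : Fin r × Fin n} {j : Fin r}
    (hdeg : (1 - 1 / ((r : ℝ) - 1)) * n < (Set.ncard {y : Fin n | G.Adj u (j, y)} : ℝ)) :
    (r - 1) * #{y | ¬G.Adj u (j, y)} < n := by
  rw [Set.ncard_eq_toFinset_card', Set.toFinset_ofPred] at hdeg
  have hsum := card_filter_add_card_filter_not (s := univ) fun y => G.Adj u (j, y)
  rw [card_univ, Fintype.card_fin] at hsum
  have hr' : (0 : ℝ) < r - 1 := by
    have : (2 : ℝ) ≤ r := by exact_mod_cast hr
    linarith
  have hsumR : (#{y | G.Adj u (j, y)} : ℝ) + #{y | ¬G.Adj u (j, y)} = n := by exact_mod_cast hsum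
  have hscaled : ((r : ℝ) - 2) * n < (r - 1) * #{y | G.Adj u (j, y)} := by
    have := mul_lt_mul_of_pos_left hdeg hr'
    rwa [← mul_assoc, mul_one_sub, mul_one_div_cancel hr'.ne', sub_sub, one_add_one_eq_two] at this
  have : ((r - 1 : ℕ) : ℝ) * #{y | ¬G.Adj u (j, y)} < n := by
    rw [Nat.cast_sub (by omega), Nat.cast_one]
    linear_combination hscaled + (↑r - 1) * hsumR
  exact_mod_cast this

def HasCommonNeighbours : Prop :=
  ∀ F : Finset (Fin r × Fin n), #F < r → ∀ i : Fin r, (∀ w ∈ F, i ≠ w.1) →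
    ∃ y, ∀ w ∈ F, G.Adj w (i, y)

theorem hasCommonNeighbours_of_minDegree (hr : 2 ≤ r) (hn : 0 < n)
    (hdeg : ∀ (u : Fin r × Fin n) (j : Fin r), j ≠ u.1 →
      (1 - 1 / ((r : ℝ) - 1)) * n < (Set.ncard {y : Fin n | G.Adj u (j, y)} : ℝ)) :
    HasCommonNeighbours G := by
  classical
  intro F hF i hi
  apply exists_forall_of_sum_card_filter_not_lt
  have hbound : ∀ w ∈ F, (r - 1) * #{y | ¬G.Adj w (i, y)} ≤ n - 1 := fun w hw =>
    Nat.le_sub_one_of_lt (card_filter_not_adj_mul_lt G hr (hdeg w i (hi w hw)))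
  have : (r - 1) * ∑ w ∈ F, #{y | ¬G.Adj w (i, y)} ≤ (r - 1) * (n - 1) :=
    calc (r - 1) * ∑ w ∈ F, #{y | ¬G.Adj w (i, y)}
        = ∑ w ∈ F, (r - 1) * #{y | ¬G.Adj w (i, y)} := mul_sum _ _ _
      _ ≤ #F * (n - 1) := sum_le_card_nsmul _ _ _ hbound
      _ ≤ (r - 1) * (n - 1) := Nat.mul_le_mul_right _ (by omega)
  rw [Fintype.card_fin]
  have := Nat.le_of_mul_le_mul_left this (by omega)
  omega

variable {G}

theorem HasCommonNeighbours.exists_pairwise_insert_update (hG : HasCommonNeighbours G)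
    {S : Finset (Fin r)} {h : Fin r → Fin n} {i : Fin r} (hi : i ∉ S)
    (hS : (S : Set (Fin r)).Pairwise fun a b => G.Adj (a, h a) (b, h b)) :
    ∃ y, (insert i S : Set (Fin r)).Pairwise fun a b =>
      G.Adj (a, Function.update h i y a) (b, Function.update h i y b) := by
  classical
  obtain ⟨y, hy⟩ := hG (S.image fun k => (k, h k))
    (card_image_le.trans_lt ((card_lt_univ_of_notMem hi).trans_eq (Fintype.card_fin r))) i (by
      simp only [mem_image]
      rintro _ ⟨k, hk, rfl⟩ rfl
      exact hi hk)
  have hne : ∀ k ∈ S, k ≠ i := fun k hk hki => hi (hki ▸ hk)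
  refine ⟨y, Set.pairwise_insert.2 ⟨fun a ha b hb hab => ?_, fun b hb _ => ?_⟩⟩
  · simp only [Function.update_of_ne (hne a ha), Function.update_of_ne (hne b hb)]
    exact hS ha hb hab
  · simp only [Function.update_self, Function.update_of_ne (hne b hb)]
    have := hy _ (mem_image_of_mem _ hb)
    exact ⟨this.symm, this⟩

theorem HasCommonNeighbours.exists_isKr_extending (hG : HasCommonNeighbours G)
    (S : Finset (Fin r)) (h : Fin r → Fin n)
    (hS : (S : Set (Fin r)).Pairwise fun i j => G.Adj (i, h i) (j, h j)) :
    ∃ f, IsKr G f ∧ ∀ i ∈ S, f i = h i := by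
  classical
  suffices ∀ (T : Finset (Fin r)) (g : Fin r → Fin n),
      ((Tᶜ : Finset (Fin r)) : Set (Fin r)).Pairwise (fun i j => G.Adj (i, g i) (j, g j)) →
      ∃ f, IsKr G f ∧ ∀ i ∉ T, f i = g i by
    obtain ⟨f, hf, hfh⟩ := this Sᶜ h (by rwa [compl_compl])
    exact ⟨f, hf, fun i hi => hfh i (notMem_compl.2 hi)⟩
  intro T
  induction T using Finset.induction_on with
  | empty =>
    intro g hg
    exact ⟨g, fun i j hij => hg (by simp) (by simp) hij, fun _ _ => rfl⟩
  | insert i T hiT ih =>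
    intro g hg
    obtain ⟨y, hy⟩ := hG.exists_pairwise_insert_update (i := i) (by simp) hg
    have hTc : insert i (insert i T)ᶜ = Tᶜ := by
      rw [compl_insert, insert_erase (mem_compl.2 hiT)]
    obtain ⟨f, hf, hfy⟩ := ih (Function.update g i y) (by rwa [← hTc, coe_insert])
    refine ⟨f, hf, fun k hk => ?_⟩
    rw [hfy k (fun hkT => hk (mem_insert_of_mem hkT)),
      Function.update_of_ne (by rintro rfl; exact hk (mem_insert_self k T))]

theorem HasCommonNeighbours.exists_isKr_of_adj (hG : HasCommonNeighbours G)
    {a b : Fin r × Fin n} (hab : G.Adj a b) (hclass : a.1 ≠ b.1) :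
    ∃ f, IsKr G f ∧ f a.1 = a.2 ∧ f b.1 = b.2 := by
  classical
  set h := Function.update (fun _ => b.2) a.1 a.2
  have ha : h a.1 = a.2 := Function.update_self ..
  have hb : h b.1 = b.2 := Function.update_of_ne hclass.symm ..
  obtain ⟨f, hf, hfh⟩ := hG.exists_isKr_extending {a.1, b.1} h (by
    rw [coe_pair, Set.pairwise_pair]
    intro _
    simp only [ha, hb]
    exact ⟨hab, hab.symm⟩)
  exact ⟨f, hf, (hfh _ (by simp)).trans ha, (hfh _ (by simp)).trans hb⟩

end

theorem stmt3_general {r n : ℕ} (hr : 3 ≤ r) (G : SimpleGraph (Fin r × Fin n))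
    (hdeg : ∀ (u : Fin r × Fin n) (j : Fin r), j ≠ u.1 →
      (1 - 1 / ((r : ℝ) - 1)) * n < (Set.ncard {y : Fin n | G.Adj u (j, y)} : ℝ)) :
    ∀ u v : Fin r × Fin n, ∃ f g : Fin r → Fin n,
      IsKr G f ∧ IsKr G g ∧ f u.1 = u.2 ∧ g v.1 = v.2 ∧ ∃ i : Fin r, f i = g i := by
  intro u v
  have hG := hasCommonNeighbours_of_minDegree G (by omega) (Fin.pos u.2) hdeg
  obtain ⟨j, hju, hjv⟩ := Fin.exists_ne_and_ne_of_two_lt u.1 v.1 (by omega)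
  obtain ⟨y, hy⟩ := hG {u, v} (card_le_two.trans_lt (by omega)) j (by
    simp only [mem_insert, mem_singleton]
    rintro w (rfl | rfl) <;> assumption)
  obtain ⟨f, hf, hfu, hfj⟩ := hG.exists_isKr_of_adj (hy u (by simp)) hju.symm
  obtain ⟨g, hg, hgv, hgj⟩ := hG.exists_isKr_of_adj (hy v (by simp)) hjv.symm
  exact ⟨f, g, hf, hg, hfu, hgv, j, hfj.trans hgj.symm⟩

/-- If `G` is balanced `r`-partite (classes of size `n`, `r ≥ 3`) with every vertex
having more than `(1 − 1/(r−1))·n` neighbours in every other class, then any two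
vertices `u, v` lie in copies `K, K'` of `K_r` sharing a common vertex. -/
theorem stmt3 {r n : ℕ} (hr : 3 ≤ r) (G : SimpleGraph (Fin r × Fin n))
    (hpart : ∀ u v : Fin r × Fin n, G.Adj u v → u.1 ≠ v.1)
    (hdeg : ∀ (u : Fin r × Fin n) (j : Fin r), j ≠ u.1 →
      (1 - 1 / ((r : ℝ) - 1)) * n < (Set.ncard {y : Fin n | G.Adj u (j, y)} : ℝ)) :
    ∀ u v : Fin r × Fin n, ∃ f g : Fin r → Fin n,
      IsKr G f ∧ IsKr G g ∧ f u.1 = u.2 ∧ g v.1 = v.2 ∧ ∃ i : Fin r, f i = g i :=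
  stmt3_general hr G hdeg
end

section
/- Let r ≥ 3, and let a, b be rational numbers with 0 < a ≤ b; set h := a + (r−1)b. If G is a balanced r-partite graph on rn vertices with δ*(G) ≥ (1 − b/h)·n, then G admits a perfect (a,b)-weighted fractional K_r-tiling, i.e., there exist non-negative weights w(K) for the rooted copies K of K_r in G such that for every vertex v of G, the sum over rooted copies K containing v of w(K)·(a if v is the root of K, b otherwise) equals 1. -/
/-!
By Farkas' lemma it suffices to refute a vertex weighting `y` with positive total such that every
rooted copy of `K_r` has nonpositive weighted `y`-sum. Every vertex misses at most
`m = ⌊b n / h⌋` vertices of each other class, so for each root `ρ` a greedy choice, visiting the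
classes cyclically and ending at `ρ`, gives a copy of `K_r` whose vertex in the `q`-th visited class
is among its `q m + 1` heaviest. Summing over the roots, every class `V` contributes its sorted
`y`-values `D` at the positions `0, m, …, (r-1)m` with weights `b, …, b, a`, and since `D` is
antitone and `h m ≤ b n` this dominates `(h / n) ∑_V y`. Hence `h ∑ y ≤ 0`.
-/

open Finset

theorem sum_insert_update_smul {κ R M : Type*} [DecidableEq κ] [Semiring R] [AddCommMonoid M]
    [Module R M] {s : Finset κ} {k₀ : κ} (hk₀ : k₀ ∉ s) (c : κ → R) (γ : R) (V : κ → M) :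
    ∑ k ∈ insert k₀ s, Function.update c k₀ γ k • V k = γ • V k₀ + ∑ k ∈ s, c k • V k := by
  rw [sum_insert hk₀, Function.update_self]
  congr 1
  exact sum_congr rfl fun k hk => by rw [Function.update_of_ne (ne_of_mem_of_not_mem hk hk₀)]

theorem exists_nonneg_sum_smul_eq_or_exists_dotProduct_pos {ι κ : Type*} [Fintype ι]
    (s : Finset κ) (V : κ → ι → ℝ) (u : ι → ℝ) :
    (∃ c : κ → ℝ, 0 ≤ c ∧ u = ∑ k ∈ s, c k • V k) ∨
      ∃ y : ι → ℝ, (∀ k ∈ s, V k ⬝ᵥ y ≤ 0) ∧ 0 < u ⬝ᵥ y := by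
  classical
  induction s using Finset.induction_on generalizing V u with
  | empty =>
    by_cases hu : u = 0
    · exact .inl ⟨0, le_rfl, by simp [hu]⟩
    · exact .inr ⟨u, by simp, by simpa using Matrix.dotProduct_self_star_pos_iff.mpr hu⟩
  | insert k₀ s hk₀ ih =>
    rcases ih V u with ⟨c, hc, rfl⟩ | ⟨y, hy, hu⟩
    · exact .inl ⟨Function.update c k₀ 0, le_update_iff.mpr ⟨le_rfl, fun k _ => hc k⟩,
        by rw [sum_insert_update_smul hk₀, zero_smul, zero_add]⟩
    by_cases hk₀y : V k₀ ⬝ᵥ y ≤ 0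
    · exact .inr ⟨y, forall_mem_insert _ _ _ |>.mpr ⟨hk₀y, hy⟩, hu⟩
    rw [not_le] at hk₀y
    -- project along `V k₀` onto the hyperplane `y⊥` and recurse there
    set P : (ι → ℝ) → ι → ℝ := fun w => w - (w ⬝ᵥ y / (V k₀ ⬝ᵥ y)) • V k₀ with hP
    rcases ih (P ∘ V) (P u) with ⟨c, hc, hcu⟩ | ⟨z, hz, hzu⟩
    · set γ := u ⬝ᵥ y / (V k₀ ⬝ᵥ y) - ∑ k ∈ s, c k * (V k ⬝ᵥ y / (V k₀ ⬝ᵥ y))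
      have hγ : 0 ≤ γ := by
        have : ∑ k ∈ s, c k * (V k ⬝ᵥ y / (V k₀ ⬝ᵥ y)) ≤ 0 :=
          sum_nonpos fun k hk => mul_nonpos_of_nonneg_of_nonpos (hc k)
            (div_nonpos_of_nonpos_of_nonneg (hy k hk) hk₀y.le)
        have : 0 < u ⬝ᵥ y / (V k₀ ⬝ᵥ y) := div_pos hu hk₀y
        linarith
      refine .inl ⟨Function.update c k₀ γ, le_update_iff.mpr ⟨hγ, fun k _ => hc k⟩, ?_⟩
      rw [sum_insert_update_smul hk₀]
      simp only [hP, Function.comp_apply, smul_sub, sum_sub_distrib, smul_smul, ← sum_smul]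
        at hcu
      simp only [γ, sub_smul]
      linear_combination (norm := module) hcu
    · set z' := z - (V k₀ ⬝ᵥ z / (V k₀ ⬝ᵥ y)) • y
      have hPz (w : ι → ℝ) : P w ⬝ᵥ z = w ⬝ᵥ z' := by
        simp only [hP, z', sub_dotProduct, dotProduct_sub, smul_dotProduct, dotProduct_smul,
          smul_eq_mul, dotProduct_comm w y]
        ring
      refine .inr ⟨z', forall_mem_insert _ _ _ |>.mpr ⟨?_, fun k hk => hPz (V k) ▸ hz k hk⟩,
        hPz u ▸ hzu⟩
      simp only [z', dotProduct_sub, dotProduct_smul, smul_eq_mul,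
        div_mul_cancel₀ _ hk₀y.ne', sub_self, le_refl]

theorem sum_range_mul_le_mul_sum_of_antitoneOn {D : ℕ → ℝ} {m t : ℕ}
    (hD : AntitoneOn D (Set.Iio (t * m))) :
    ∑ k ∈ range (t * m), D k ≤ m * ∑ q ∈ range t, D (q * m) := by
  induction t with
  | zero => simp
  | succ t ih =>
    have hblock : ∑ i ∈ range m, D (t * m + i) ≤ m * D (t * m) := by
      simpa using sum_le_card_nsmul (range m) (fun i => D (t * m + i)) (D (t * m)) fun i hi =>
        hD (by simp [add_mul]; grind) (by simp [add_mul]; grind) (by omega)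
    rw [add_mul, one_mul, sum_range_add, sum_range_succ, mul_add]
    gcongr
    exact ih (hD.mono fun k hk => by simp only [Set.mem_Iio] at hk ⊢; nlinarith)

theorem mul_sum_range_le_of_antitoneOn {n m p : ℕ} {A B : ℝ} {D : ℕ → ℝ}
    (hD : AntitoneOn D (Set.Iio n)) (hpm : p * m < n) (hH : 0 ≤ A + p * B)
    (hm : (A + p * B) * m ≤ B * n) :
    (A + p * B) * ∑ k ∈ range n, D k ≤ n * (B * ∑ q ∈ range p, D (q * m) + A * D (p * m)) := by
  have hhead : ∑ k ∈ range (p * m), D k ≤ m * ∑ q ∈ range p, D (q * m) :=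
    sum_range_mul_le_mul_sum_of_antitoneOn (hD.mono (Set.Iio_subset_Iio hpm.le))
  have htail : ∑ k ∈ Ico (p * m) n, D k ≤ (n - p * m : ℝ) * D (p * m) := by
    have := sum_le_card_nsmul (Ico (p * m) n) D (D (p * m)) fun k hk => by
      simp only [mem_Ico] at hk
      exact hD (by simpa using hpm) (by simpa using hk.2) hk.1
    simpa [Nat.cast_sub hpm.le] using this
  have hlast : p * D (p * m) ≤ ∑ q ∈ range p, D (q * m) := by
    simpa using card_nsmul_le_sum (range p) (fun q => D (q * m)) (D (p * m)) fun q hq => by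
      simp only [mem_range] at hq
      exact hD (by simp only [Set.mem_Iio]; nlinarith) (by simpa using hpm)
        (Nat.mul_le_mul_right m hq.le)
  rw [← sum_range_add_sum_Ico D hpm.le]
  nlinarith [mul_le_mul_of_nonneg_left (add_le_add hhead htail) hH,
    mul_le_mul_of_nonneg_right hm (sub_nonneg.mpr hlast)]

noncomputable def decreasingValues {n : ℕ} (g : Fin n → ℝ) (k : ℕ) : ℝ :=
  if hk : k < n then g (Tuple.sort (fun x => -g x) ⟨k, hk⟩) else 0

section decreasingValues

variable {n : ℕ} (g : Fin n → ℝ)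

theorem decreasingValues_of_lt {k : ℕ} (hk : k < n) :
    decreasingValues g k = g (Tuple.sort (fun x => -g x) ⟨k, hk⟩) := dif_pos hk

theorem antitoneOn_decreasingValues : AntitoneOn (decreasingValues g) (Set.Iio n) := by
  intro k hk l hl hkl
  rw [decreasingValues_of_lt g hk, decreasingValues_of_lt g hl]
  exact neg_le_neg_iff.mp (Tuple.monotone_sort (fun x => -g x) (Fin.mk_le_mk.mpr hkl))

theorem sum_range_decreasingValues : ∑ k ∈ range n, decreasingValues g k = ∑ x, g x := by
  rw [← Fin.sum_univ_eq_sum_range, ← Equiv.sum_comp (Tuple.sort fun x => -g x) g]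
  exact sum_congr rfl fun k _ => decreasingValues_of_lt g k.isLt

theorem lt_card_filter_decreasingValues_le {t : ℕ} (ht : t < n) :
    t < #{x | decreasingValues g t ≤ g x} := by
  have hsub : (Iic (⟨t, ht⟩ : Fin n)).map (Tuple.sort fun x => -g x).toEmbedding ⊆
      ({x | decreasingValues g t ≤ g x} : Finset (Fin n)) := by
    intro x hx
    obtain ⟨k, hk, rfl⟩ := mem_map.mp hx
    simp only [mem_filter, mem_univ, true_and, Equiv.coe_toEmbedding]
    rw [← Fin.eta k k.isLt, ← decreasingValues_of_lt g k.isLt]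
    exact antitoneOn_decreasingValues g k.isLt ht (Fin.le_def.mp (mem_Iic.mp hk))
  simpa using card_le_card hsub

end decreasingValues

theorem exists_mem_forall_adj {r n m : ℕ} {G : SimpleGraph (Fin r × Fin n)} [DecidableRel G.Adj]
    (hmiss : ∀ (u : Fin r × Fin n) (j : Fin r), j ≠ u.1 → #{x | ¬ G.Adj u (j, x)} ≤ m)
    {τ : Fin r → ℕ} (hτ : Function.Injective τ) (f : Fin r → Fin n) (j : Fin r)
    {S : Finset (Fin n)} (hS : τ j * m < #S) :
    ∃ x ∈ S, ∀ i, τ i < τ j → G.Adj (i, f i) (j, x) := by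
  set E : Finset (Fin r) := {i | τ i < τ j}
  have hE : #E ≤ τ j := by
    simpa using card_le_card_of_injOn (t := range (τ j)) τ
      (fun i hi => by simpa [E] using hi) hτ.injOn
  set bad := E.biUnion fun i => ({x | ¬ G.Adj (i, f i) (j, x)} : Finset (Fin n))
  have hbad : #bad ≤ τ j * m := by
    refine card_biUnion_le.trans ((sum_le_card_nsmul _ _ m fun i hi => ?_).trans ?_)
    · exact hmiss (i, f i) j (hτ.ne_iff.mp (ne_of_gt (by simpa [E] using hi)))
    · simpa using Nat.mul_le_mul_right m hE
  obtain ⟨x, hxS, hxbad⟩ := exists_mem_notMem_of_card_lt_card (hbad.trans_lt hS)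
  refine ⟨x, hxS, fun i hi => ?_⟩
  by_contra h
  exact hxbad (mem_biUnion.mpr ⟨i, by simpa [E] using hi, by simpa using h⟩)

theorem exists_isKr_forall_mem {r n m : ℕ} {G : SimpleGraph (Fin r × Fin n)} [DecidableRel G.Adj]
    (hmiss : ∀ (u : Fin r × Fin n) (j : Fin r), j ≠ u.1 → #{x | ¬ G.Adj u (j, x)} ≤ m)
    {τ : Fin r → ℕ} (hτ : Function.Injective τ) {S : Fin r → Finset (Fin n)}
    (hS : ∀ j, τ j * m < #(S j)) : ∃ f, IsKr G f ∧ ∀ j, f j ∈ S j := by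
  have greedy (p : ℕ) : ∃ f : Fin r → Fin n, (∀ j, f j ∈ S j) ∧
      ∀ i j, i ≠ j → τ i < p → τ j < p → G.Adj (i, f i) (j, f j) := by
    induction p with
    | zero =>
      choose f hf using fun j => card_pos.mp (Nat.zero_lt_of_lt (hS j))
      exact ⟨f, hf, fun _ _ _ h => absurd h (Nat.not_lt_zero _)⟩
    | succ p ih =>
      obtain ⟨f, hfS, hfadj⟩ := ih
      by_cases hp : ∃ j, τ j = p
      swap
      · have hlt (i : Fin r) (hi : τ i < p + 1) : τ i < p :=
          lt_of_le_of_ne (Nat.lt_succ_iff.mp hi) fun h => hp ⟨i, h⟩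
        exact ⟨f, hfS, fun i j hij hi hj => hfadj i j hij (hlt i hi) (hlt j hj)⟩
      obtain ⟨j, rfl⟩ := hp
      have hlt (i : Fin r) (hij : i ≠ j) (hi : τ i < τ j + 1) : τ i < τ j :=
        lt_of_le_of_ne (Nat.lt_succ_iff.mp hi) (hτ.ne hij)
      obtain ⟨x, hxS, hx⟩ := exists_mem_forall_adj hmiss hτ f j (hS j)
      refine ⟨Function.update f j x, fun i => ?_, fun i i' hii' hi hi' => ?_⟩
      · rcases eq_or_ne i j with rfl | hij
        · simpa using hxS
        · simpa [hij] using hfS i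
      by_cases hij : i = j
      · subst hij
        simpa [hii'.symm] using (hx i' (hlt i' hii'.symm hi')).symm
      by_cases hi'j : i' = j
      · subst hi'j
        simpa [hij] using hx i (hlt i hij hi)
      · simpa [hij, hi'j] using hfadj i i' hii' (hlt i hij hi) (hlt i' hi'j hi')
  obtain ⟨f, hfS, hfadj⟩ := greedy (univ.sup τ + 1)
  have hτsup (i : Fin r) : τ i < univ.sup τ + 1 := Nat.lt_succ_of_le (le_sup (mem_univ i))
  exact ⟨f, fun i j hij => hfadj i j hij (hτsup i) (hτsup j), hfS⟩

theorem sum_ite_mul_add_last_sub {p : ℕ} (j : Fin (p + 1)) (A B : ℝ) (F : ℕ → ℝ) :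
    ∑ ρ, (if ρ = j then A else B) * F (j + (Fin.last p - ρ) : Fin (p + 1)) =
      B * ∑ q ∈ range p, F q + A * F p := by
  let e : Fin (p + 1) ≃ Fin (p + 1) := (Equiv.subLeft (Fin.last p)).trans (Equiv.addLeft j)
  have he (ρ : Fin (p + 1)) : ρ = j ↔ e ρ = Fin.last p := by
    simp only [e, Equiv.trans_apply, Equiv.subLeft_apply, Equiv.coe_addLeft]
    constructor
    · rintro rfl; simp
    · intro h; grind
  rw [Fintype.sum_equiv e _ (fun q => (if q = Fin.last p then A else B) * F q)
    (fun ρ => by simp only [he]; rfl), Fin.sum_univ_castSucc]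
  simp [Fin.castSucc_ne_last, mul_sum, Fin.sum_univ_eq_sum_range fun q => B * F q]

def rootedCopyVector {r n : ℕ} (a b : ℝ) (K : (Fin r → Fin n) × Fin r) (v : Fin r × Fin n) :
    ℝ :=
  if K.1 v.1 = v.2 then (if K.2 = v.1 then a else b) else 0

theorem rootedCopyVector_dotProduct {r n : ℕ} (a b : ℝ) (K : (Fin r → Fin n) × Fin r)
    (y : Fin r × Fin n → ℝ) :
    rootedCopyVector a b K ⬝ᵥ y = ∑ j, (if K.2 = j then a else b) * y (j, K.1 j) := by
  simp [dotProduct, rootedCopyVector, Fintype.sum_prod_type, ite_mul]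

theorem exists_tiling_of_one_eq_sum_smul {r n : ℕ} {G : SimpleGraph (Fin r × Fin n)}
    [DecidablePred (IsKr G)] {a b : ℝ} {c : (Fin r → Fin n) × Fin r → ℝ} (hc : 0 ≤ c)
    (hc1 : 1 = ∑ K with IsKr G K.1, c K • rootedCopyVector a b K) :
    ∃ w : ((Fin r → Fin n) × Fin r) → ℝ, (∀ K, 0 ≤ w K) ∧ (∀ K, ¬ IsKr G K.1 → w K = 0) ∧
      ∀ v : Fin r × Fin n,
        ∑ K, (if K.1 v.1 = v.2 then w K * (if K.2 = v.1 then a else b) else 0) = 1 := by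
  refine ⟨fun K => if IsKr G K.1 then c K else 0, fun K => ?_, fun K hK => if_neg hK,
    fun v => ?_⟩
  · dsimp only
    split_ifs
    exacts [hc K, le_rfl]
  · have hv := congrFun hc1 v
    rw [Pi.one_apply, Finset.sum_apply, sum_filter] at hv
    rw [hv]
    refine sum_congr rfl fun K _ => ?_
    simp only [Pi.smul_apply, smul_eq_mul, rootedCopyVector]
    split_ifs <;> simp

theorem sum_nonpos_of_forall_isKr {p n m : ℕ} {G : SimpleGraph (Fin (p + 1) × Fin n)}
    [DecidableRel G.Adj]
    (hmiss : ∀ (u : Fin (p + 1) × Fin n) (j : Fin (p + 1)), j ≠ u.1 →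
      #{x | ¬ G.Adj u (j, x)} ≤ m)
    {A B : ℝ} (hA : 0 < A) (hB : 0 ≤ B) (hpm : p * m < n) (hm : (A + p * B) * m ≤ B * n)
    {y : Fin (p + 1) × Fin n → ℝ} (hy : ∀ K, IsKr G K.1 → rootedCopyVector A B K ⬝ᵥ y ≤ 0) :
    ∑ v, y v ≤ 0 := by
  set D : Fin (p + 1) → ℕ → ℝ := fun j => decreasingValues fun x => y (j, x)
  -- for the root `ρ`, visit the classes cyclically starting right after `ρ`, so `ρ` comes last
  set τ : Fin (p + 1) → Fin (p + 1) → ℕ := fun ρ j => (j + (Fin.last p - ρ) : Fin (p + 1))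
  have hcoef (ρ j : Fin (p + 1)) : 0 ≤ if ρ = j then A else B := by split_ifs <;> linarith
  have hroot (ρ : Fin (p + 1)) : ∑ j, (if ρ = j then A else B) * D j (τ ρ j * m) ≤ 0 := by
    have hτ : Function.Injective (τ ρ) := Fin.val_injective.comp (add_left_injective _)
    have hlt (j : Fin (p + 1)) : τ ρ j * m < n :=
      lt_of_le_of_lt (Nat.mul_le_mul_right m (Fin.is_le _)) hpm
    obtain ⟨f, hf, hfS⟩ := exists_isKr_forall_mem hmiss hτ
      (S := fun j => {x | D j (τ ρ j * m) ≤ y (j, x)})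
      fun j => lt_card_filter_decreasingValues_le _ (hlt j)
    refine le_trans (sum_le_sum fun j _ => ?_) (rootedCopyVector_dotProduct A B (f, ρ) y ▸ hy _ hf)
    exact mul_le_mul_of_nonneg_left (by simpa using hfS j) (hcoef ρ j)
  have hclass (j : Fin (p + 1)) : (A + p * B) * ∑ x, y (j, x) ≤
      n * ∑ ρ, (if ρ = j then A else B) * D j (τ ρ j * m) := by
    rw [sum_ite_mul_add_last_sub j A B fun q => D j (q * m), ← sum_range_decreasingValues]
    exact mul_sum_range_le_of_antitoneOn (antitoneOn_decreasingValues _) hpm (by positivity) hm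
  have htotal : (A + p * B) * ∑ v, y v ≤ 0 :=
    calc (A + p * B) * ∑ v, y v = ∑ j, (A + p * B) * ∑ x, y (j, x) := by
          rw [Fintype.sum_prod_type, mul_sum]
      _ ≤ ∑ j, n * ∑ ρ, (if ρ = j then A else B) * D j (τ ρ j * m) :=
          sum_le_sum fun j _ => hclass j
      _ = n * ∑ ρ, ∑ j, (if ρ = j then A else B) * D j (τ ρ j * m) := by
          rw [← mul_sum, sum_comm]
      _ ≤ 0 := mul_nonpos_of_nonneg_of_nonpos n.cast_nonneg (sum_nonpos fun ρ _ => hroot ρ)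
  exact nonpos_of_mul_nonpos_right htotal (by positivity)

theorem card_filter_not_le_floor {α : Type*} [Fintype α] {P : α → Prop} [DecidablePred P]
    {β : ℝ} (h : (1 - β) * Fintype.card α ≤ #{x | P x}) :
    #{x | ¬ P x} ≤ ⌊β * Fintype.card α⌋₊ := by
  have hcard := card_filter_add_card_filter_not (s := univ) P
  rw [card_univ] at hcard
  apply Nat.le_floor
  have : (#{x | P x} : ℝ) + #{x | ¬ P x} = Fintype.card α := by exact_mod_cast hcard
  linarith

theorem exists_card_not_adj_le {p n : ℕ} {G : SimpleGraph (Fin (p + 1) × Fin n)}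
    [DecidableRel G.Adj] {A B : ℝ} (hA : 0 < A) (hB : 0 ≤ B) (hn : 0 < n)
    (hdeg : ∀ (u : Fin (p + 1) × Fin n) (j : Fin (p + 1)), j ≠ u.1 →
      (1 - B / (A + p * B)) * n ≤ #{x | G.Adj u (j, x)}) :
    ∃ m : ℕ, (∀ (u : Fin (p + 1) × Fin n) (j : Fin (p + 1)), j ≠ u.1 →
      #{x | ¬ G.Adj u (j, x)} ≤ m) ∧ p * m < n ∧ (A + p * B) * m ≤ B * n := by
  have hH : 0 < A + p * B := by positivity
  set m := ⌊B / (A + p * B) * n⌋₊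
  have hm : (A + p * B) * m ≤ B * n :=
    calc (A + p * B) * m ≤ (A + p * B) * (B / (A + p * B) * n) := by
          gcongr; exact Nat.floor_le (by positivity)
      _ = B * n := by field_simp
  refine ⟨m, fun u j hj => ?_, ?_, hm⟩
  · simpa using card_filter_not_le_floor (P := fun x => G.Adj u (j, x)) (by simpa using hdeg u j hj)
  · have : (A + p * B) * (p * m) < (A + p * B) * n := by
      nlinarith [mul_le_mul_of_nonneg_left hm (p.cast_nonneg : (0 : ℝ) ≤ p),
        mul_pos hA (Nat.cast_pos.mpr hn : (0 : ℝ) < n)]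
    exact_mod_cast lt_of_mul_lt_mul_left this hH.le

theorem stmt5_general {r n : ℕ} (a b : ℚ) (ha : 0 < a) (hab : a ≤ b)
    (h : ℚ) (hh : h = a + ((r : ℚ) - 1) * b)
    (G : SimpleGraph (Fin r × Fin n))
    (hdeg : ∀ (u : Fin r × Fin n) (j : Fin r), j ≠ u.1 →
      (1 - (b : ℝ) / (h : ℝ)) * n ≤ (Set.ncard {y : Fin n | G.Adj u (j, y)} : ℝ)) :
    ∃ w : ((Fin r → Fin n) × Fin r) → ℝ,
      (∀ K, 0 ≤ w K) ∧
      (∀ K, ¬ IsKr G K.1 → w K = 0) ∧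
      (∀ v : Fin r × Fin n,
        ∑ K : (Fin r → Fin n) × Fin r,
          (if K.1 v.1 = v.2 then w K * (if K.2 = v.1 then (a : ℝ) else (b : ℝ)) else 0)
          = 1) := by
  classical
  rcases exists_nonneg_sum_smul_eq_or_exists_dotProduct_pos {K | IsKr G K.1}
    (rootedCopyVector (a : ℝ) b) 1 with ⟨c, hc, hc1⟩ | ⟨y, hy, hy1⟩
  · exact exists_tiling_of_one_eq_sum_smul hc hc1
  rw [one_dotProduct] at hy1
  obtain ⟨⟨ρ, x⟩, -⟩ := nonempty_of_sum_ne_zero hy1.ne'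
  obtain ⟨p, rfl⟩ : ∃ p, r = p + 1 := Nat.exists_eq_succ_of_ne_zero ρ.pos.ne'
  have hA : (0 : ℝ) < a := by exact_mod_cast ha
  have hB : (0 : ℝ) ≤ b := by exact_mod_cast ha.le.trans hab
  have hH : (h : ℝ) = a + p * b := by rw [hh]; push_cast; ring
  obtain ⟨m, hmiss, hpm, hm⟩ := exists_card_not_adj_le (G := G) hA hB x.pos fun u j hj => by
    simpa [Set.ncard_eq_toFinset_card', hH] using hdeg u j hj
  have := sum_nonpos_of_forall_isKr hmiss hA hB hpm hm fun K hK => hy K (by simpa using hK)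
  linarith

/-- Let `r ≥ 3`, `0 < a ≤ b` rationals, `h = a + (r−1)b`.  If `G` is balanced
`r`-partite on `rn` vertices with `δ*(G) ≥ (1 − b/h)·n`, then `G` admits a perfect
`(a,b)`-weighted fractional `K_r`-tiling: non-negative weights on rooted copies of
`K_r` so that at each vertex the total weighted contribution (coefficient `a` at the
root, `b` elsewhere) is exactly `1`. -/
theorem stmt5 {r n : ℕ} (hr : 3 ≤ r) (a b : ℚ) (ha : 0 < a) (hab : a ≤ b)
    (h : ℚ) (hh : h = a + ((r : ℚ) - 1) * b)
    (G : SimpleGraph (Fin r × Fin n))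
    (hpart : ∀ u v : Fin r × Fin n, G.Adj u v → u.1 ≠ v.1)
    (hdeg : ∀ (u : Fin r × Fin n) (j : Fin r), j ≠ u.1 →
      (1 - (b : ℝ) / (h : ℝ)) * n ≤ (Set.ncard {y : Fin n | G.Adj u (j, y)} : ℝ)) :
    ∃ w : ((Fin r → Fin n) × Fin r) → ℝ,
      (∀ K, 0 ≤ w K) ∧
      (∀ K, ¬ IsKr G K.1 → w K = 0) ∧
      (∀ v : Fin r × Fin n,
        ∑ K : (Fin r → Fin n) × Fin r,
          (if K.1 v.1 = v.2 then w K * (if K.2 = v.1 then (a : ℝ) else (b : ℝ)) else 0)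
          = 1) :=
  stmt5_general a b ha hab h hh G hdeg
end

section
/- Let G be a graph and let G' be its m-fold blow-up (each vertex replaced by m copies, each edge replaced by the complete bipartite graph between the corresponding sets of copies). If G' admits a perfect (a,b)-weighted fractional K_r-tiling, then so does G: assign to each rooted copy of K_r in G the average of the weights of the m^r corresponding rooted copies in G'. -/
/-- `f` picks out a copy of `K_r` in a graph `G` (pairwise adjacent vertices). -/
def IsKrCopy {V : Type*} {r : ℕ} (G : SimpleGraph V) (f : Fin r → V) : Prop :=
  ∀ i j : Fin r, i ≠ j → G.Adj (f i) (f j)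

/-- `w` is a perfect `(a,b)`-weighted fractional `K_r`-tiling of `G`: non-negative
weights supported on rooted copies of `K_r` (pairs `(f, ρ)` with root `f ρ`), such
that at each vertex `v` the total weighted contribution, with coefficient `a` if `v`
is the root and `b` otherwise, equals `1`. -/
def PerfFracTiling {V : Type*} [Fintype V] [DecidableEq V] (G : SimpleGraph V)
    (r : ℕ) (a b : ℝ) (w : ((Fin r → V) × Fin r) → ℝ) : Prop :=
  (∀ K, 0 ≤ w K) ∧
  (∀ K, ¬ IsKrCopy G K.1 → w K = 0) ∧
  (∀ v : V, ∑ K : (Fin r → V) × Fin r, ∑ i : Fin r,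
      (if K.1 i = v then w K * (if i = K.2 then a else b) else 0) = 1)

/-- The `m`-fold blow-up of `G`: each vertex is replaced by `m` copies and each edge
by the complete bipartite graph between the corresponding sets of copies. -/
def blowup {V : Type*} (G : SimpleGraph V) (m : ℕ) : SimpleGraph (V × Fin m) where
  Adj u v := G.Adj u.1 v.1
  symm := ⟨fun u v h => G.adj_symm h⟩
  loopless := ⟨fun u h => G.irrefl h⟩

/-!
Projecting a rooted copy `(f, ρ)` along a map `φ` is compatible with the weight it places on
vertices: the weight of `(φ ∘ f, ρ)` at `v` is the total weight of `(f, ρ)` on the fibre of `v`.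
So if every rooted copy of `G` receives the total weight of its lifts, the load at `v` is the sum
of the loads of a perfect tiling over the fibre of `v`, namely `m`; dividing by `m` gives a perfect
tiling of `G`. A homomorphism maps copies of `K_r` to copies of `K_r`, so weight stays on cliques.
-/

open Finset

theorem IsKrCopy.map {V W : Type*} {r : ℕ} {G' : SimpleGraph W} {G : SimpleGraph V}
    (φ : G' →g G) {f : Fin r → W} (hf : IsKrCopy G' f) : IsKrCopy G (φ ∘ f) :=
  fun i j hij => φ.map_adj (hf i j hij)

section Tiling

variable {V W : Type*} [DecidableEq V] [DecidableEq W] {r : ℕ}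

def rootedCopyWeight (a b : ℝ) (K : (Fin r → V) × Fin r) (v : V) : ℝ :=
  ∑ i : Fin r, if K.1 i = v then (if i = K.2 then a else b) else 0

theorem rootedCopyWeight_map [Fintype W] (a b : ℝ) (φ : W → V) (K : (Fin r → W) × Fin r)
    (v : V) :
    rootedCopyWeight a b (φ ∘ K.1, K.2) v = ∑ u with φ u = v, rootedCopyWeight a b K u := by
  simp only [rootedCopyWeight]
  rw [sum_comm]
  refine sum_congr rfl fun i _ => ?_
  simp [sum_ite_eq]

variable [Fintype V] [Fintype W]

def tilingLoad (a b : ℝ) (w : ((Fin r → V) × Fin r) → ℝ) (v : V) : ℝ :=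
  ∑ K, w K * rootedCopyWeight a b K v

theorem perfFracTiling_iff (G : SimpleGraph V) (a b : ℝ) (w : ((Fin r → V) × Fin r) → ℝ) :
    PerfFracTiling G r a b w ↔
      (∀ K, 0 ≤ w K) ∧ (∀ K, ¬ IsKrCopy G K.1 → w K = 0) ∧ ∀ v, tilingLoad a b w v = 1 := by
  simp only [PerfFracTiling, tilingLoad, rootedCopyWeight, mul_sum, mul_ite, mul_zero]

theorem tilingLoad_const_mul (a b c : ℝ) (w : ((Fin r → V) × Fin r) → ℝ) (v : V) :
    tilingLoad a b (fun K => c * w K) v = c * tilingLoad a b w v := by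
  simp only [tilingLoad, mul_sum, mul_assoc]

def pushTiling (φ : W → V) (w' : ((Fin r → W) × Fin r) → ℝ) : ((Fin r → V) × Fin r) → ℝ :=
  fun K => ∑ K' with (φ ∘ K'.1, K'.2) = K, w' K'

theorem tilingLoad_pushTiling (a b : ℝ) (φ : W → V) (w' : ((Fin r → W) × Fin r) → ℝ) (v : V) :
    tilingLoad a b (pushTiling φ w') v = ∑ u with φ u = v, tilingLoad a b w' u := by
  calc tilingLoad a b (pushTiling φ w') v
      = ∑ K, ∑ K' with (φ ∘ K'.1, K'.2) = K, w' K' * rootedCopyWeight a b (φ ∘ K'.1, K'.2) v := by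
        refine sum_congr rfl fun K _ => ?_
        rw [pushTiling, sum_mul]
        refine sum_congr rfl fun K' hK' => ?_
        rw [(mem_filter.1 hK').2]
    _ = ∑ K', w' K' * ∑ u with φ u = v, rootedCopyWeight a b K' u := by
        rw [sum_fiberwise]
        simp only [rootedCopyWeight_map]
    _ = ∑ u with φ u = v, tilingLoad a b w' u := by
        simp only [tilingLoad, mul_sum]
        exact sum_comm

theorem PerfFracTiling.of_hom {G' : SimpleGraph W} {G : SimpleGraph V} (φ : G' →g G) {m : ℕ}
    (hm : m ≠ 0) (hφ : ∀ v, #{u | φ u = v} = m) {a b : ℝ} {w' : ((Fin r → W) × Fin r) → ℝ}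
    (hw' : PerfFracTiling G' r a b w') :
    PerfFracTiling G r a b (fun K => (m : ℝ)⁻¹ * pushTiling φ w' K) := by
  rw [perfFracTiling_iff] at hw' ⊢
  obtain ⟨hnonneg, hsupp, hload⟩ := hw'
  refine ⟨fun K => mul_nonneg (by positivity) (sum_nonneg fun K' _ => hnonneg K'),
    fun K hK => ?_, fun v => ?_⟩
  · refine mul_eq_zero_of_right _ (sum_eq_zero fun K' hK' => hsupp K' fun hK'copy => hK ?_)
    rw [← (mem_filter.1 hK').2]
    exact hK'copy.map φ
  · rw [tilingLoad_const_mul, tilingLoad_pushTiling, sum_congr rfl fun u _ => hload u,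
      sum_const, hφ, nsmul_one]
    exact inv_mul_cancel₀ (Nat.cast_ne_zero.2 hm)

end Tiling

def blowupProj {V : Type*} (G : SimpleGraph V) (m : ℕ) : blowup G m →g G where
  toFun := Prod.fst
  map_rel' h := h

theorem card_filter_fst_eq {V : Type*} [Fintype V] [DecidableEq V] (m : ℕ) (v : V) :
    #{u : V × Fin m | u.1 = v} = m := by
  rw [← univ_product_univ, filter_product_left (· = v)]
  simp [filter_eq']

/-- If the `m`-fold blow-up `G'` of `G` admits a perfect `(a,b)`-weighted fractional
`K_r`-tiling, then so does `G` (by averaging the weights of the corresponding rooted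
copies of `K_r` in `G'`). -/
theorem stmt6 {V : Type*} [Fintype V] [DecidableEq V] (G : SimpleGraph V)
    (m r : ℕ) (hm : 0 < m) (a b : ℝ)
    (w' : ((Fin r → V × Fin m) × Fin r) → ℝ)
    (hw' : PerfFracTiling (blowup G m) r a b w') :
    ∃ w : ((Fin r → V) × Fin r) → ℝ, PerfFracTiling G r a b w :=
  ⟨_, hw'.of_hom (blowupProj G m) hm.ne' (card_filter_fst_eq m)⟩
end

section
/- Let H be a graph on h vertices with χ(H) = r ≥ 3 and gcd(H) = 1. Then there exists a positive integer s such that the complete r-partite graph U(H) with one vertex class of size s·r·h + 1, one vertex class of size s·r·h − 1, and r−2 vertex classes of size s·r·h admits a perfect H-tiling. -/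
/-- A function `c : V → Fin r` is a proper colouring of `H` with `r` colours. -/
def ProperCol {V : Type*} {r : ℕ} (H : SimpleGraph V) (c : V → Fin r) : Prop :=
  ∀ u v, H.Adj u v → c u ≠ c v

/-- The family `F` of `m` injective homomorphic copies of `H` in `G` is an
`H`-tiling: each copy preserves adjacency and the copies are vertex-disjoint. -/
def IsHTiling {VH VG : Type*} (H : SimpleGraph VH) (G : SimpleGraph VG)
    {m : ℕ} (F : Fin m → VH → VG) : Prop :=
  (∀ j u v, H.Adj u v → G.Adj (F j u) (F j v)) ∧
  (∀ j j' u u', F j u = F j' u' → j = j' ∧ u = u')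

/-- `G` admits a perfect `H`-tiling: vertex-disjoint copies of `H` covering `V(G)`. -/
def HasPerfectTiling {VH VG : Type*} (H : SimpleGraph VH) (G : SimpleGraph VG) : Prop :=
  ∃ (m : ℕ) (F : Fin m → VH → VG), IsHTiling H G F ∧ ∀ x : VG, ∃ j u, F j u = x

/-!
A family of proper `r`-colourings `c₁, …, cₘ` of `H` yields a perfect `H`-tiling of the complete
`r`-partite graph whose `i`-th class has `∑ⱼ |cⱼ⁻¹(i)|` vertices: copy `j` of `H` is placed
according to `cⱼ`. These class-size vectors form an additive monoid `P ⊆ ℤʳ`. Summing the `r`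
cyclic rotations of one colouring gives the constant vector `u = h·𝟙`, and dropping one rotation
shows `u - n ∈ P` for every single-colouring vector `n`; hence every `g` in the group generated by
these vectors satisfies `g + K·u ∈ P` for some `K`. Swapping two colours and relabelling shows
`(|X_a| - |X_b|)(e₀ - e₁)` lies in that group, so `gcd(H) = 1` puts `e₀ - e₁` there. Padding with
copies of `u` gives the class sizes `srh + 1`, `srh - 1`, `srh, …, srh`.
-/

theorem Equiv.Perm.exists_apply_eq_and_apply_eq {α : Type*} [DecidableEq α] {a b x y : α}
    (hab : a ≠ b) (hxy : x ≠ y) : ∃ σ : Equiv.Perm α, σ a = x ∧ σ b = y := by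
  have hb : Equiv.swap a x b ≠ x := by
    simpa [Equiv.swap_apply_right] using (Equiv.swap a x).injective.ne hab.symm
  refine ⟨(Equiv.swap a x).trans (Equiv.swap (Equiv.swap a x b) y), ?_, ?_⟩
  · simp [Equiv.swap_apply_of_ne_of_ne hb.symm hxy]
  · simp

theorem AddSubgroup.exists_add_nsmul_mem_of_mem_closure {G : Type*} [AddCommGroup G]
    {M : AddSubmonoid G} {s : Set G} {u : G} (hs : s ⊆ M) (hu : ∀ x ∈ s, u - x ∈ M) {g : G}
    (hg : g ∈ AddSubgroup.closure s) : ∃ K : ℕ, g + K • u ∈ M := by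
  induction hg using AddSubgroup.closure_induction'' with
  | mem x hx => exact ⟨0, by simpa using hs hx⟩
  | neg_mem x hx => exact ⟨1, by simpa [neg_add_eq_sub] using hu x hx⟩
  | zero => exact ⟨0, by simp⟩
  | add x y _ _ hx hy =>
    obtain ⟨K, hK⟩ := hx
    obtain ⟨L, hL⟩ := hy
    exact ⟨K + L, by simpa [add_nsmul, add_add_add_comm] using M.add_mem hK hL⟩

theorem Int.one_mem_closure_of_forall_dvd {S : Set ℤ}
    (hS : ∀ d : ℕ, (∀ x ∈ S, (d : ℤ) ∣ x) → d = 1) : (1 : ℤ) ∈ AddSubgroup.closure S := by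
  obtain ⟨a, ha⟩ := Int.subgroup_cyclic (AddSubgroup.closure S)
  rw [← AddSubgroup.zmultiples_eq_closure] at ha
  have hmem : ∀ x, x ∈ AddSubgroup.closure S ↔ a ∣ x := by
    intro x; rw [ha, Int.mem_zmultiples_iff]
  have hunit : a.natAbs = 1 :=
    hS _ fun x hx => Int.natAbs_dvd.mpr ((hmem x).mp (AddSubgroup.subset_closure hx))
  rw [hmem, ← Int.natAbs_dvd, hunit, Nat.cast_one]

theorem sub_comp_swap_eq_smul {ι R : Type*} [DecidableEq ι] [Ring R] (n : ι → R) (i j : ι) :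
    n - n ∘ Equiv.swap i j = (n i - n j) • (Pi.single i 1 - Pi.single j 1) := by
  funext k
  rcases eq_or_ne k i with rfl | hki
  · rcases eq_or_ne k j with rfl | hkj
    · simp
    · simp [hkj]
  · rcases eq_or_ne k j with rfl | hkj
    · simp [hki]
    · simp [hki, hkj, Equiv.swap_apply_of_ne_of_ne hki hkj]

theorem ProperCol.comp_injective {V : Type*} {r r' : ℕ} {H : SimpleGraph V} {c : V → Fin r}
    (hc : ProperCol H c) {f : Fin r → Fin r'} (hf : f.Injective) : ProperCol H (f ∘ c) :=
  fun u v huv => hf.ne (hc u v huv)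

section Colourings

variable {V : Type*} [Fintype V] {r : ℕ}

def classSizes (c : V → Fin r) (i : Fin r) : ℤ :=
  Fintype.card {v // c v = i}

theorem ncard_eq_classSizes (c : V → Fin r) (i : Fin r) :
    (Set.ncard {v | c v = i} : ℤ) = classSizes c i := by
  rw [classSizes, ← Nat.card_coe_set_eq, Nat.card_eq_fintype_card]
  rfl

theorem classSizes_perm_comp (σ : Equiv.Perm (Fin r)) (c : V → Fin r) :
    classSizes (σ ∘ c) = classSizes c ∘ σ.symm := by
  funext i
  simp only [classSizes, Function.comp_apply]
  exact congrArg _ (Fintype.card_congr (Equiv.subtypeEquivRight fun v => σ.eq_symm_apply.symm))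

theorem sum_classSizes (c : V → Fin r) : ∑ i, classSizes c i = Fintype.card V := by
  simp only [classSizes]
  rw [← Nat.cast_sum, ← Fintype.card_sigma, Fintype.card_congr (Equiv.sigmaFiberEquiv c)]

theorem sum_classSizes_addLeft_comp [NeZero r] (c : V → Fin r) :
    ∑ t : Fin r, classSizes (Equiv.addLeft t ∘ c) = fun _ => (Fintype.card V : ℤ) := by
  funext i
  simp only [Finset.sum_apply, classSizes_perm_comp, Function.comp_apply, Equiv.addLeft_symm]
  rw [← sum_classSizes c]
  exact Fintype.sum_equiv (Equiv.subLeft i) _ _ fun t => by simp [sub_eq_neg_add]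

def tilingProfiles (H : SimpleGraph V) (r : ℕ) : AddSubmonoid (Fin r → ℤ) where
  carrier := {n | ∃ (m : ℕ) (c : Fin m → V → Fin r), (∀ j, ProperCol H (c j)) ∧
    ∑ j, classSizes (c j) = n}
  zero_mem' := ⟨0, Fin.elim0, Fin.rec0, by simp⟩
  add_mem' := by
    rintro _ _ ⟨m, c, hc, rfl⟩ ⟨m', c', hc', rfl⟩
    refine ⟨m + m', Fin.append c c', fun j => ?_, by simp [Fin.sum_univ_add]⟩
    induction j using Fin.addCases <;> simp [hc, hc']

variable {H : SimpleGraph V}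

theorem classSizes_mem_tilingProfiles {c : V → Fin r} (hc : ProperCol H c) :
    classSizes c ∈ tilingProfiles H r :=
  ⟨1, fun _ => c, fun _ => hc, by simp⟩

theorem const_sub_classSizes_mem_tilingProfiles [NeZero r] {c : V → Fin r} (hc : ProperCol H c) :
    (fun _ => (Fintype.card V : ℤ)) - classSizes c ∈ tilingProfiles H r := by
  -- the rotations of `c` other than the identity
  have hrot := sum_classSizes_addLeft_comp c
  rw [← Finset.add_sum_erase _ _ (Finset.mem_univ 0)] at hrot
  rw [← hrot, Equiv.addLeft_zero, Equiv.Perm.coe_one, Function.id_comp, add_sub_cancel_left]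
  exact (tilingProfiles H r).sum_mem fun t _ =>
    classSizes_mem_tilingProfiles (hc.comp_injective (Equiv.addLeft t).injective)

theorem const_mem_tilingProfiles [NeZero r] {c : V → Fin r} (hc : ProperCol H c) :
    (fun _ => (Fintype.card V : ℤ)) ∈ tilingProfiles H r := by
  simpa using (tilingProfiles H r).add_mem (const_sub_classSizes_mem_tilingProfiles hc)
    (classSizes_mem_tilingProfiles hc)

theorem smul_single_sub_single_mem_closure {c : V → Fin r} (hc : ProperCol H c) (a b : Fin r)
    {i j : Fin r} (hij : i ≠ j) :
    (classSizes c a - classSizes c b) • (Pi.single i 1 - Pi.single j 1) ∈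
      AddSubgroup.closure (classSizes '' {c | ProperCol H c}) := by
  rcases eq_or_ne a b with rfl | hab
  · simp
  obtain ⟨σ, rfl, rfl⟩ := Equiv.Perm.exists_apply_eq_and_apply_eq hab hij
  have hmem : ∀ τ : Equiv.Perm (Fin r), classSizes c ∘ τ ∈
      AddSubgroup.closure (classSizes '' {c | ProperCol H c}) := fun τ =>
    AddSubgroup.subset_closure ⟨τ.symm ∘ c, hc.comp_injective τ.symm.injective, by
      rw [classSizes_perm_comp, Equiv.symm_symm]⟩
  have key := sub_comp_swap_eq_smul (classSizes c ∘ σ.symm) (σ a) (σ b)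
  simp only [Function.comp_apply, Equiv.symm_apply_apply] at key
  rw [← key, Function.comp_assoc, ← Equiv.coe_trans]
  exact sub_mem (hmem _) (hmem _)

theorem single_sub_single_mem_closure {i j : Fin r} (hij : i ≠ j)
    (hgcd : (1 : ℤ) ∈ AddSubgroup.closure
      {x | ∃ c : V → Fin r, ProperCol H c ∧ ∃ a b, x = classSizes c a - classSizes c b}) :
    Pi.single i 1 - Pi.single j 1 ∈ AddSubgroup.closure (classSizes '' {c | ProperCol H c}) := by
  have hle : AddSubgroup.closure
      {x | ∃ c : V → Fin r, ProperCol H c ∧ ∃ a b, x = classSizes c a - classSizes c b} ≤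
      (AddSubgroup.closure (classSizes '' {c | ProperCol H c})).comap
        (zmultiplesHom _ (Pi.single i 1 - Pi.single j 1)) := by
    rw [AddSubgroup.closure_le]
    rintro _ ⟨c, hc, a, b, rfl⟩
    simpa using smul_single_sub_single_mem_closure hc a b hij
  simpa using hle hgcd

theorem exists_forall_ge_single_sub_single_add_const_mem [NeZero r] {c₀ : V → Fin r}
    (hc₀ : ProperCol H c₀) {i j : Fin r} (hij : i ≠ j)
    (hgcd : (1 : ℤ) ∈ AddSubgroup.closure
      {x | ∃ c : V → Fin r, ProperCol H c ∧ ∃ a b, x = classSizes c a - classSizes c b}) :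
    ∃ K : ℕ, ∀ L ≥ K, Pi.single i 1 - Pi.single j 1 + (fun _ => ((L * Fintype.card V : ℕ) : ℤ)) ∈
      tilingProfiles H r := by
  obtain ⟨K, hK⟩ := AddSubgroup.exists_add_nsmul_mem_of_mem_closure
    (by rintro _ ⟨c, hc, rfl⟩; exact classSizes_mem_tilingProfiles hc)
    (by rintro _ ⟨c, hc, rfl⟩; exact const_sub_classSizes_mem_tilingProfiles hc)
    (single_sub_single_mem_closure hij hgcd)
  refine ⟨K, fun L hL => ?_⟩
  convert add_mem hK (nsmul_mem (const_mem_tilingProfiles hc₀) (L - K)) using 1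
  rw [add_assoc, ← add_nsmul, Nat.add_sub_cancel' hL]
  ext
  simp

theorem hasPerfectTiling_of_card_fiber {m : ℕ} (c : Fin m → V → Fin r)
    (hc : ∀ j, ProperCol H (c j)) {szs : Fin r → ℕ}
    (hcard : ∀ i, Fintype.card {p : Fin m × V // c p.1 p.2 = i} = szs i) :
    HasPerfectTiling H (SimpleGraph.completeMultipartiteGraph fun i => Fin (szs i)) := by
  let Φ : Fin m × V ≃ Σ i, Fin (szs i) :=
    (Equiv.sigmaFiberEquiv fun p : Fin m × V => c p.1 p.2).symm.trans
      (Equiv.sigmaCongrRight fun i => Fintype.equivFinOfCardEq (hcard i))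
  refine ⟨m, fun j v => Φ (j, v), ⟨fun j u v huv => hc j u v huv, fun j j' u u' h => ?_⟩,
    fun x => ⟨(Φ.symm x).1, (Φ.symm x).2, by simp⟩⟩
  simpa using Φ.injective h

theorem hasPerfectTiling_of_mem_tilingProfiles {n : Fin r → ℤ} (hn : n ∈ tilingProfiles H r) :
    HasPerfectTiling H (SimpleGraph.completeMultipartiteGraph fun i => Fin (n i).toNat) := by
  obtain ⟨m, c, hc, rfl⟩ := hn
  refine hasPerfectTiling_of_card_fiber c hc fun i => ?_
  rw [Fintype.card_congr (Equiv.subtypeProdEquivSigmaSubtype fun j v => c j v = i),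
    Fintype.card_sigma]
  simp [classSizes, ← Nat.cast_sum]

end Colourings

/-- Let `H` have `h` vertices, `χ(H) = r ≥ 3` and `gcd(H) = 1` (every natural number
dividing all differences of colour-class sizes of proper `r`-colourings equals `1`).
Then there is a positive integer `s` such that the complete `r`-partite graph with
one class of size `srh + 1`, one of size `srh − 1` and `r − 2` classes of size `srh`
admits a perfect `H`-tiling. -/
theorem stmt8 {VH : Type*} [Fintype VH] (H : SimpleGraph VH) (r h : ℕ)
    (hr : 3 ≤ r) (hcard : Fintype.card VH = h)
    (hchrom : H.chromaticNumber = (r : ℕ∞))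
    (hgcd : ∀ d : ℕ,
      (∀ c : VH → Fin r, ProperCol H c → ∀ i j : Fin r,
        (d : ℤ) ∣ ((Set.ncard {v | c v = i} : ℤ) - (Set.ncard {v | c v = j} : ℤ))) →
      d = 1) :
    ∃ (s : ℕ) (szs : Fin r → ℕ) (i₀ i₁ : Fin r), 0 < s ∧ i₀ ≠ i₁ ∧
      szs i₀ = s * r * h + 1 ∧ szs i₁ = s * r * h - 1 ∧
      (∀ i, i ≠ i₀ → i ≠ i₁ → szs i = s * r * h) ∧
      HasPerfectTiling H (SimpleGraph.completeMultipartiteGraph (fun i => Fin (szs i))) := by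
  subst hcard
  have : NeZero r := ⟨by omega⟩
  obtain ⟨C⟩ := SimpleGraph.chromaticNumber_le_iff_colorable.mp hchrom.le
  let i₀ : Fin r := ⟨0, by omega⟩
  let i₁ : Fin r := ⟨1, by omega⟩
  have hi : i₀ ≠ i₁ := by simp [i₀, i₁, Fin.ext_iff]
  obtain ⟨K, hK⟩ := exists_forall_ge_single_sub_single_add_const_mem
    (fun u v huv => C.valid huv) hi <|
    Int.one_mem_closure_of_forall_dvd fun d hd => hgcd d fun c hc a b => by
      simpa only [ncard_eq_classSizes] using hd _ ⟨c, hc, a, b, rfl⟩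
  have hn := hK ((K + 1) * r) (by nlinarith)
  refine ⟨K + 1, _, i₀, i₁, K.succ_pos, hi, ?_, ?_, fun i h₀ h₁ => ?_,
    hasPerfectTiling_of_mem_tilingProfiles hn⟩
  -- so that `omega` treats the common class size as an atom
  all_goals generalize (K + 1) * r * Fintype.card VH = N
  · simp only [Pi.add_apply, Pi.sub_apply, Pi.single_eq_same, Pi.single_eq_of_ne hi, sub_zero]
    omega
  · simp only [Pi.add_apply, Pi.sub_apply, Pi.single_eq_same, Pi.single_eq_of_ne hi.symm,
      zero_sub]
    omega
  · simp [h₀, h₁]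
end

section
/- Let G = G((n_{ij}), r) be the row-column construction and H a graph with χ(H) = r. Then for any copy H' of H in G and any rows j, j', the difference |V(H') ∩ V^j| − |V(H') ∩ V^{j'}| is divisible by gcd(H). Consequently, for any H-tiling T of G, gcd(H) divides |V(T) ∩ V^j| − |V(T) ∩ V^{j'}|; in particular if gcd(H) > 1 and |V^1| − |V^2| = 1 then G admits no perfect H-tiling. -/
/-- The row-column construction `G((n_{ij}), r)`. -/
def rcGraph (r : ℕ) (nij : Fin r → Fin r → ℕ) :
    SimpleGraph (Σ i : Fin r, Σ j : Fin r, Fin (nij i j)) where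
  Adj u v := u.1 ≠ v.1 ∧ u.2.1 ≠ v.2.1
  symm := ⟨fun u v h => ⟨h.1.symm, h.2.symm⟩⟩
  loopless := ⟨fun u h => h.1 rfl⟩

/-! Rows of `G((n_{ij}), r)` are independent sets, so the row index of a copy of `H` in `G` is a
proper `r`-colouring of `H`, and the row counts of the copy differ by multiples of `g`. The copies
of a tiling are disjoint, so its row counts are sums of those of its copies; a perfect tiling
covers whole rows, whose sizes differ by `1`, forcing `g ∣ 1`. -/

lemma Set.ncard_setOf_eq_sum_ite {α : Type*} [Fintype α] (P : α → Prop) [DecidablePred P] :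
    {a | P a}.ncard = ∑ a, if P a then 1 else 0 := by
  rw [Set.ncard_eq_toFinset_card', Set.toFinset_ofPred, Finset.card_filter]

lemma ncard_covered_eq_sum {α β : Type*} [Fintype α] {m : ℕ} (F : Fin m → α → β)
    (hF : ∀ p p' u u', F p u = F p' u' → p = p' ∧ u = u') (P : β → Prop) :
    {x | (∃ p u, F p u = x) ∧ P x}.ncard = ∑ p, {u | P (F p u)}.ncard := by
  classical
  have hinj : Function.Injective fun q : Fin m × α => F q.1 q.2 :=
    fun q q' h => Prod.ext (hF _ _ _ _ h).1 (hF _ _ _ _ h).2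
  have himage : {x | (∃ p u, F p u = x) ∧ P x}
      = (fun q : Fin m × α => F q.1 q.2) '' {q | P (F q.1 q.2)} := by
    ext x
    constructor
    · rintro ⟨⟨p, u, rfl⟩, hx⟩
      exact ⟨(p, u), hx, rfl⟩
    · rintro ⟨⟨p, u⟩, hx, rfl⟩
      exact ⟨⟨p, u, rfl⟩, hx⟩
  rw [himage, Set.ncard_image_of_injective _ hinj, Set.ncard_setOf_eq_sum_ite,
    Fintype.sum_prod_type]
  simp only [Set.ncard_setOf_eq_sum_ite]

section RowColumn

variable {r : ℕ} {nij : Fin r → Fin r → ℕ}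

lemma ncard_row_rcGraph (j : Fin r) :
    {x : Σ i : Fin r, Σ j : Fin r, Fin (nij i j) | x.2.1 = j}.ncard = ∑ i, nij i j := by
  let embed : (Σ i, Fin (nij i j)) → Σ i : Fin r, Σ j : Fin r, Fin (nij i j) :=
    fun y => ⟨y.1, j, y.2⟩
  have hrange : {x : Σ i : Fin r, Σ j : Fin r, Fin (nij i j) | x.2.1 = j} = Set.range embed := by
    ext ⟨i, j', k⟩
    constructor
    · rintro rfl
      exact ⟨⟨i, k⟩, rfl⟩
    · rintro ⟨⟨i, k⟩, h⟩
      cases h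
      rfl
  have hinj : Function.Injective embed := by
    rintro ⟨i, k⟩ ⟨i', k'⟩ h
    cases h
    rfl
  rw [hrange, ← Set.image_univ, Set.ncard_image_of_injective _ hinj, Set.ncard_univ,
    Nat.card_sigma]
  simp only [Nat.card_eq_fintype_card, Fintype.card_fin]

lemma properCol_row_of_hom {VH : Type*} {H : SimpleGraph VH}
    {f : VH → Σ i : Fin r, Σ j : Fin r, Fin (nij i j)}
    (hf : ∀ u v, H.Adj u v → (rcGraph r nij).Adj (f u) (f v)) :
    ProperCol H fun v => (f v).2.1 :=
  fun u v h => (hf u v h).2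

variable {VH : Type*} {H : SimpleGraph VH} {g : ℕ}
  (hg : ∀ c : VH → Fin r, ProperCol H c → ∀ i j : Fin r,
    (g : ℤ) ∣ ((Set.ncard {v | c v = i} : ℤ) - (Set.ncard {v | c v = j} : ℤ)))
include hg

lemma dvd_rowDiff_of_hom {f : VH → Σ i : Fin r, Σ j : Fin r, Fin (nij i j)}
    (hf : ∀ u v, H.Adj u v → (rcGraph r nij).Adj (f u) (f v)) (j j' : Fin r) :
    (g : ℤ) ∣ ((Set.ncard {u | (f u).2.1 = j} : ℤ) - (Set.ncard {u | (f u).2.1 = j'} : ℤ)) :=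
  hg _ (properCol_row_of_hom hf) j j'

lemma dvd_rowDiff_of_isHTiling [Fintype VH] {m : ℕ}
    {F : Fin m → VH → Σ i : Fin r, Σ j : Fin r, Fin (nij i j)}
    (hF : IsHTiling H (rcGraph r nij) F) (j j' : Fin r) :
    (g : ℤ) ∣ ((Set.ncard {x | (∃ p u, F p u = x) ∧ x.2.1 = j} : ℤ) -
      (Set.ncard {x | (∃ p u, F p u = x) ∧ x.2.1 = j'} : ℤ)) := by
  rw [ncard_covered_eq_sum F hF.2, ncard_covered_eq_sum F hF.2]
  push_cast
  rw [← Finset.sum_sub_distrib]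
  exact Finset.dvd_sum fun p _ => dvd_rowDiff_of_hom hg (hF.1 p) j j'

lemma not_hasPerfectTiling_of_rowSum_eq_add_one [Fintype VH] (hg1 : 1 < g) {j₁ j₂ : Fin r}
    (hsum : ∑ i, nij i j₁ = ∑ i, nij i j₂ + 1) : ¬ HasPerfectTiling H (rcGraph r nij) := by
  rintro ⟨m, F, hF, hcover⟩
  have hrow : ∀ j : Fin r, {x : Σ i : Fin r, Σ j : Fin r, Fin (nij i j) |
      (∃ p u, F p u = x) ∧ x.2.1 = j} = {x | x.2.1 = j} := fun j => by
    simp only [hcover, true_and]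
  have hdvd := dvd_rowDiff_of_isHTiling hg hF j₁ j₂
  rw [hrow, hrow, ncard_row_rcGraph, ncard_row_rcGraph, hsum, Nat.cast_add, Nat.cast_one,
    add_sub_cancel_left, Int.natCast_dvd_ofNat, Nat.dvd_one] at hdvd
  omega

end RowColumn

theorem stmt11_general {VH : Type*} [Fintype VH] (H : SimpleGraph VH) (r : ℕ)
    (nij : Fin r → Fin r → ℕ) (g : ℕ)
    (hg : ∀ c : VH → Fin r, ProperCol H c → ∀ i j : Fin r,
      (g : ℤ) ∣ ((Set.ncard {v | c v = i} : ℤ) - (Set.ncard {v | c v = j} : ℤ))) :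
    (∀ f : VH → (Σ i : Fin r, Σ j : Fin r, Fin (nij i j)),
      Function.Injective f →
      (∀ u v, H.Adj u v → (rcGraph r nij).Adj (f u) (f v)) →
      ∀ j j' : Fin r,
        (g : ℤ) ∣ ((Set.ncard {u : VH | (f u).2.1 = j} : ℤ) -
          (Set.ncard {u : VH | (f u).2.1 = j'} : ℤ))) ∧
    (∀ (m : ℕ) (F : Fin m → VH → (Σ i : Fin r, Σ j : Fin r, Fin (nij i j))),
      IsHTiling H (rcGraph r nij) F →
      ∀ j j' : Fin r,
        (g : ℤ) ∣ ((Set.ncard {x : (Σ i : Fin r, Σ j : Fin r, Fin (nij i j)) |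
            (∃ p u, F p u = x) ∧ x.2.1 = j} : ℤ) -
          (Set.ncard {x : (Σ i : Fin r, Σ j : Fin r, Fin (nij i j)) |
            (∃ p u, F p u = x) ∧ x.2.1 = j'} : ℤ))) ∧
    (∀ j₁ j₂ : Fin r, 1 < g →
      (∑ i : Fin r, nij i j₁) = (∑ i : Fin r, nij i j₂) + 1 →
      ¬ HasPerfectTiling H (rcGraph r nij)) :=
  ⟨fun f _ hf => dvd_rowDiff_of_hom hg hf, fun m F hF => dvd_rowDiff_of_isHTiling hg hF,
    fun j₁ j₂ hg1 hsum => not_hasPerfectTiling_of_rowSum_eq_add_one hg hg1 hsum⟩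

/-- Let `χ(H) = r` and let `g` divide every difference of colour-class sizes over
proper `r`-colourings of `H` (as `gcd(H)` does).  Then in `G = G((n_{ij}), r)`:
(1) for any copy `H'` of `H` and rows `j, j'`, `g` divides
`|V(H') ∩ V^j| − |V(H') ∩ V^{j'}|`; (2) the same holds for the union of any
`H`-tiling; (3) if `g > 1` and `|V^1| − |V^2| = 1` then `G` has no perfect
`H`-tiling. -/
theorem stmt11 {VH : Type*} [Fintype VH] (H : SimpleGraph VH) (r : ℕ)
    (hr : 1 ≤ r) (hchrom : H.chromaticNumber = (r : ℕ∞))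
    (nij : Fin r → Fin r → ℕ) (g : ℕ)
    (hg : ∀ c : VH → Fin r, ProperCol H c → ∀ i j : Fin r,
      (g : ℤ) ∣ ((Set.ncard {v | c v = i} : ℤ) - (Set.ncard {v | c v = j} : ℤ))) :
    (∀ f : VH → (Σ i : Fin r, Σ j : Fin r, Fin (nij i j)),
      Function.Injective f →
      (∀ u v, H.Adj u v → (rcGraph r nij).Adj (f u) (f v)) →
      ∀ j j' : Fin r,
        (g : ℤ) ∣ ((Set.ncard {u : VH | (f u).2.1 = j} : ℤ) -
          (Set.ncard {u : VH | (f u).2.1 = j'} : ℤ))) ∧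
    (∀ (m : ℕ) (F : Fin m → VH → (Σ i : Fin r, Σ j : Fin r, Fin (nij i j))),
      IsHTiling H (rcGraph r nij) F →
      ∀ j j' : Fin r,
        (g : ℤ) ∣ ((Set.ncard {x : (Σ i : Fin r, Σ j : Fin r, Fin (nij i j)) |
            (∃ p u, F p u = x) ∧ x.2.1 = j} : ℤ) -
          (Set.ncard {x : (Σ i : Fin r, Σ j : Fin r, Fin (nij i j)) |
            (∃ p u, F p u = x) ∧ x.2.1 = j'} : ℤ))) ∧
    (∀ j₁ j₂ : Fin r, 1 < g →
      (∑ i : Fin r, nij i j₁) = (∑ i : Fin r, nij i j₂) + 1 →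
      ¬ HasPerfectTiling H (rcGraph r nij)) :=
  stmt11_general H r nij g hg
end

section
/- Let H be a graph on h vertices with χ(H) = r ≥ 3 and σ := σ(H). For each n, the construction G with n_{i1} := ⌈σn⌉ − 1 for all i and the remaining n_{i2}, ..., n_{ir} as equal as possible with Σ_j n_{ij} = n satisfies δ*(G) ≥ (1 − 1/χ_cr(H))·n − 1, and every H-tiling of G has size strictly less than rn/h; in particular G has no perfect H-tiling. -/
/-- `σ(H)`: the minimum, over proper `r`-colourings `c` of `H` and colour classes,
of the ratio (size of colour class)/(number of vertices). -/
noncomputable def sigmaH (V : Type*) [Fintype V] (H : SimpleGraph V) (r : ℕ) : ℝ :=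
  sInf { x : ℝ | ∃ c : V → Fin r, ProperCol H c ∧
    ∃ i : Fin r, x = (Set.ncard {v | c v = i} : ℝ) / (Fintype.card V : ℝ) }

section Sigma

variable {V : Type*} [Fintype V] {H : SimpleGraph V} {r : ℕ}

lemma sigmaH_nonneg : 0 ≤ sigmaH V H r :=
  Real.sInf_nonneg (by rintro _ ⟨c, -, i, rfl⟩; positivity)

lemma sigmaH_le {c : V → Fin r} (hc : ProperCol H c) (i : Fin r) :
    sigmaH V H r ≤ (Set.ncard {v | c v = i} : ℝ) / Fintype.card V :=
  csInf_le ⟨0, by rintro _ ⟨c, -, i, rfl⟩; positivity⟩ ⟨c, hc, i, rfl⟩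

lemma sigmaH_mul_card_le [Nonempty V] {c : V → Fin r} (hc : ProperCol H c) (i : Fin r) :
    sigmaH V H r * Fintype.card V ≤ Set.ncard {v | c v = i} :=
  (le_div_iff₀ (by positivity)).1 (sigmaH_le hc i)

lemma sum_ncard_fiber_eq_card (c : V → Fin r) :
    ∑ i, Set.ncard {v | c v = i} = Fintype.card V := by
  classical
  simp only [Set.ncard_eq_toFinset_card', Set.toFinset_ofPred]
  exact (Finset.card_eq_sum_card_fiberwise fun v _ => Finset.mem_univ (c v)).symm

lemma sigmaH_mul_le_one [Nonempty V] {c : V → Fin r} (hc : ProperCol H c) :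
    sigmaH V H r * r ≤ 1 :=
  calc sigmaH V H r * r = ∑ _i : Fin r, sigmaH V H r := by simp [mul_comm]
    _ ≤ ∑ i, (Set.ncard {v | c v = i} : ℝ) / Fintype.card V :=
      Finset.sum_le_sum fun i _ => sigmaH_le hc i
    _ = 1 := by
      rw [← Finset.sum_div, div_eq_one_iff_eq (by positivity)]
      exact_mod_cast sum_ncard_fiber_eq_card c

end Sigma

lemma ProperCol.comp {V W : Type*} {r : ℕ} {G : SimpleGraph W} {H : SimpleGraph V}
    {c : W → Fin r} (hc : ProperCol G c) {f : V → W}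
    (hf : ∀ u v, H.Adj u v → G.Adj (f u) (f v)) : ProperCol H (c ∘ f) :=
  fun u v huv => hc _ _ (hf u v huv)

namespace IsHTiling

variable {VH VG : Type*} {H : SimpleGraph VH} {G : SimpleGraph VG} {m : ℕ}
  {F : Fin m → VH → VG}

lemma sum_ncard_preimage_le [Finite VH] [Finite VG] (hF : IsHTiling H G F) (P : VG → Prop) :
    ∑ j, Set.ncard {u | P (F j u)} ≤ Set.ncard {v | P v} := by
  have hinj : Function.Injective
      (fun p : Σ j, {u // P (F j u)} => (⟨F p.1 p.2, p.2.2⟩ : {v // P v})) := by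
    rintro ⟨j, u, hu⟩ ⟨j', u', hu'⟩ h
    obtain ⟨rfl, rfl⟩ := hF.2 j j' u u' (congrArg Subtype.val h)
    rfl
  have := Nat.card_le_card_of_injective _ hinj
  rwa [Nat.card_sigma] at this

lemma mul_sigmaH_mul_card_le [Fintype VH] [Nonempty VH] [Finite VG] {r : ℕ}
    (hF : IsHTiling H G F) {c : VG → Fin r} (hc : ProperCol G c) (i : Fin r) :
    (m : ℝ) * (sigmaH VH H r * Fintype.card VH) ≤ Set.ncard {v | c v = i} :=
  calc (m : ℝ) * (sigmaH VH H r * Fintype.card VH)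
      = ∑ _j : Fin m, sigmaH VH H r * Fintype.card VH := by simp
    _ ≤ ∑ j, (Set.ncard {u | c (F j u) = i} : ℝ) :=
      Finset.sum_le_sum fun j _ => sigmaH_mul_card_le (hc.comp (hF.1 j)) i
    _ ≤ Set.ncard {v | c v = i} := by exact_mod_cast hF.sum_ncard_preimage_le fun v => c v = i

lemma mul_card_eq [Fintype VH] [Fintype VG] (hF : IsHTiling H G F)
    (hcover : ∀ x, ∃ j u, F j u = x) : m * Fintype.card VH = Fintype.card VG := by
  have hbij : Function.Bijective fun p : Fin m × VH => F p.1 p.2 :=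
    ⟨fun p q h => Prod.ext_iff.2 (hF.2 _ _ _ _ h), fun x => by
      obtain ⟨j, u, rfl⟩ := hcover x; exact ⟨(j, u), rfl⟩⟩
  simpa using Fintype.card_of_bijective hbij

end IsHTiling

section RowColumn

variable {r : ℕ} (nij : Fin r → Fin r → ℕ)

lemma ncard_setOf_block (p : Fin r → Fin r → Prop) [∀ i j, Decidable (p i j)] :
    Set.ncard {v : Σ i : Fin r, Σ j : Fin r, Fin (nij i j) | p v.1 v.2.1} =
      ∑ i, ∑ j, if p i j then nij i j else 0 := by
  rw [Set.ncard_eq_toFinset_card', Set.toFinset_ofPred, Finset.card_filter,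
    ← Finset.univ_sigma_univ, Finset.sum_sigma]
  refine Finset.sum_congr rfl fun i _ => ?_
  rw [← Finset.univ_sigma_univ, Finset.sum_sigma]
  refine Finset.sum_congr rfl fun j _ => ?_
  split_ifs <;> simp [*]

lemma card_rcGraph_vertex :
    Fintype.card (Σ i : Fin r, Σ j : Fin r, Fin (nij i j)) = ∑ i, ∑ j, nij i j := by
  simp

lemma ncard_rcGraph_row (j₀ : Fin r) :
    Set.ncard {v : Σ i : Fin r, Σ j : Fin r, Fin (nij i j) | v.2.1 = j₀} = ∑ i, nij i j₀ := by
  simp [ncard_setOf_block nij fun _ j => j = j₀]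

lemma properCol_rcGraph_row : ProperCol (rcGraph r nij) fun v => v.2.1 :=
  fun _ _ h => h.2

lemma ncard_rcGraph_adj_column_add (u : Σ i : Fin r, Σ j : Fin r, Fin (nij i j)) {i' : Fin r}
    (hi' : i' ≠ u.1) :
    Set.ncard {v | (rcGraph r nij).Adj u v ∧ v.1 = i'} + nij i' u.2.1 = ∑ j, nij i' j := by
  classical
  have hset : {v | (rcGraph r nij).Adj u v ∧ v.1 = i'} =
      {v : Σ i : Fin r, Σ j : Fin r, Fin (nij i j) | v.1 = i' ∧ v.2.1 ≠ u.2.1} := by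
    ext v
    simp only [rcGraph, Set.mem_ofPred_eq]
    constructor
    · rintro ⟨⟨-, h⟩, rfl⟩; exact ⟨rfl, Ne.symm h⟩
    · rintro ⟨rfl, h⟩; exact ⟨⟨Ne.symm hi', Ne.symm h⟩, rfl⟩
  rw [hset, ncard_setOf_block nij fun i j => i = i' ∧ j ≠ u.2.1]
  rw [Fintype.sum_eq_single i' fun i hi => by simp [hi]]
  simp only [true_and, ← Finset.sum_filter, Finset.filter_ne',
    Finset.sum_erase_add _ _ (Finset.mem_univ _)]

end RowColumn

lemma IsHTiling.mul_card_lt_of_rcGraph {VH : Type*} [Fintype VH] [Nonempty VH]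
    {H : SimpleGraph VH} {r n k m : ℕ} {nij : Fin r → Fin r → ℕ} {j₀ : Fin r}
    {F : Fin m → VH → Σ i : Fin r, Σ j : Fin r, Fin (nij i j)}
    (hF : IsHTiling H (rcGraph r nij) F) (hrow : ∀ i, nij i j₀ = k)
    (hk : (k : ℝ) < sigmaH VH H r * n) : m * Fintype.card VH < r * n := by
  have hrowσ := hF.mul_sigmaH_mul_card_le (properCol_rcGraph_row nij) j₀
  simp only [ncard_rcGraph_row, hrow, Finset.sum_const, Finset.card_univ, Fintype.card_fin,
    smul_eq_mul, Nat.cast_mul] at hrowσ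
  have hr0 : (0 : ℝ) < r := Nat.cast_pos.2 (Fin.pos j₀)
  by_contra! hbig
  have hbigR : (r : ℝ) * n ≤ m * Fintype.card VH := by exact_mod_cast hbig
  nlinarith [mul_le_mul_of_nonneg_left hbigR (sigmaH_nonneg (V := VH) (H := H) (r := r)),
    mul_lt_mul_of_pos_left hk hr0]

open Finset in
lemma card_mul_add_one_le_sum_add_card {ι : Type*} {s : Finset ι} {a : ι → ℕ} {j₁ : ι}
    (hj₁ : j₁ ∈ s) (hle : ∀ j ∈ s, a j₁ ≤ a j + 1) : #s * a j₁ + 1 ≤ ∑ j ∈ s, a j + #s := by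
  classical
  have key : ∑ _j ∈ s.erase j₁, a j₁ ≤ ∑ j ∈ s.erase j₁, (a j + 1) :=
    sum_le_sum fun j hj => hle j (mem_of_mem_erase hj)
  rw [sum_const, smul_eq_mul, sum_add_distrib, sum_const, smul_eq_mul, mul_one] at key
  rw [← add_sum_erase s a hj₁, ← card_erase_add_one hj₁]
  linarith

open Finset in
lemma entry_le_of_balanced {r n t : ℕ} {σ : ℝ} {a : Fin r → ℕ} {j₀ : Fin r} (hr : 1 < r)
    (hσr : σ * r ≤ 1) (hσn : σ * n ≤ t) (htn : (t : ℝ) ≤ σ * n + 1) (ht1 : 1 ≤ t)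
    (ha₀ : a j₀ = t - 1) (hsum : ∑ j, a j = n)
    (hbal : ∀ j j', j ≠ j₀ → j' ≠ j₀ → a j ≤ a j' + 1) (j : Fin r) :
    (a j : ℝ) ≤ (1 - σ) / (r - 1) * n + 1 := by
  have hr1 : (0 : ℝ) < r - 1 := by
    have : (1 : ℝ) < r := by exact_mod_cast hr
    linarith
  rw [div_mul_eq_mul_div, ← sub_le_iff_le_add, le_div_iff₀ hr1]
  rcases eq_or_ne j j₀ with rfl | hj
  · have : (a j : ℝ) = t - 1 := by rw [ha₀, Nat.cast_sub ht1, Nat.cast_one]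
    nlinarith
  · have hcount := card_mul_add_one_le_sum_add_card (s := univ.erase j₀)
      (mem_erase.2 ⟨hj, mem_univ j⟩) fun j' hj' => hbal j j' hj (ne_of_mem_erase hj')
    have hcard : (#(univ.erase j₀) : ℝ) = r - 1 := by
      rw [eq_sub_iff_add_eq]
      exact_mod_cast (card_erase_add_one (mem_univ j₀)).trans (card_fin r)
    have hrest : ∑ j ∈ univ.erase j₀, (a j : ℝ) + (t - 1) = n := by
      rw [← Nat.cast_one, ← Nat.cast_sub ht1, ← ha₀, ← hsum]
      exact_mod_cast sum_erase_add univ a (mem_univ j₀)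
    have hcount' : ((r : ℝ) - 1) * a j + 1 ≤ ∑ j ∈ univ.erase j₀, (a j : ℝ) + (r - 1) := by
      rw [← hcard]
      exact_mod_cast hcount
    linarith

theorem stmt12_general {VH : Type*} [Fintype VH] (H : SimpleGraph VH) (r h n : ℕ)
    (hr : 3 ≤ r) (hcard : Fintype.card VH = h)
    (hchrom : H.chromaticNumber = (r : ℕ∞))
    (t : ℕ) (ht : (t : ℤ) = ⌈sigmaH VH H r * (n : ℝ)⌉) (ht1 : 1 ≤ t)
    (j₀ : Fin r) (nij : Fin r → Fin r → ℕ)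
    (hrow : ∀ i : Fin r, nij i j₀ = t - 1)
    (hsum : ∀ i : Fin r, ∑ j : Fin r, nij i j = n)
    (hbal : ∀ (i : Fin r) (j j' : Fin r), j ≠ j₀ → j' ≠ j₀ → nij i j ≤ nij i j' + 1) :
    (∀ u : (Σ i : Fin r, Σ j : Fin r, Fin (nij i j)), ∀ i' : Fin r, i' ≠ u.1 →
      (1 - (1 - sigmaH VH H r) / ((r : ℝ) - 1)) * n - 1 ≤
        (Set.ncard {v : (Σ i : Fin r, Σ j : Fin r, Fin (nij i j)) |
          (rcGraph r nij).Adj u v ∧ v.1 = i'} : ℝ)) ∧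
    (∀ (m : ℕ) (F : Fin m → VH → (Σ i : Fin r, Σ j : Fin r, Fin (nij i j))),
      IsHTiling H (rcGraph r nij) F → (m : ℝ) < (r : ℝ) * n / h) ∧
    ¬ HasPerfectTiling H (rcGraph r nij) := by
  subst hcard
  obtain ⟨C⟩ := SimpleGraph.chromaticNumber_le_iff_colorable.1 hchrom.le
  have : Nonempty VH := not_isEmpty_iff.1 fun _ => by
    rw [SimpleGraph.chromaticNumber_eq_zero_of_isEmpty, eq_comm, Nat.cast_eq_zero] at hchrom
    omega
  have hσr := sigmaH_mul_le_one (r := r) fun _ _ huv => C.valid huv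
  set σ := sigmaH VH H r
  have hceil : (t : ℝ) = ⌈σ * n⌉ := by exact_mod_cast ht
  have hσt : σ * n ≤ t := hceil ▸ Int.le_ceil _
  have htσ : (t : ℝ) < σ * n + 1 := hceil ▸ Int.ceil_lt_add_one _
  have hsmall : ∀ (m : ℕ) (F : Fin m → VH → (Σ i : Fin r, Σ j : Fin r, Fin (nij i j))),
      IsHTiling H (rcGraph r nij) F → m * Fintype.card VH < r * n := fun m F hF =>
    hF.mul_card_lt_of_rcGraph hrow (by rw [Nat.cast_sub ht1, Nat.cast_one]; linarith)
  refine ⟨fun u i' hi' => ?_, fun m F hF => ?_, ?_⟩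
  · have hdeg := ncard_rcGraph_adj_column_add nij u hi'
    have hentry := entry_le_of_balanced (by omega) hσr hσt htσ.le ht1 (hrow i') (hsum i')
      (hbal i') u.2.1
    rw [hsum i'] at hdeg
    rw [← hdeg] at hentry ⊢
    push_cast at hentry ⊢
    linarith
  · rw [lt_div_iff₀ (by positivity)]
    exact_mod_cast hsmall m F hF
  · rintro ⟨m, F, hF, hcover⟩
    have hmn := hF.mul_card_eq hcover
    simp only [card_rcGraph_vertex, hsum, Finset.sum_const, Finset.card_univ, Fintype.card_fin,
      smul_eq_mul] at hmn
    exact (hsmall m F hF).ne hmn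

/-- The `gcd(H) = 1` lower-bound construction: `H` has `h` vertices, `χ(H) = r ≥ 3`,
`σ := σ(H)`, `t = ⌈σn⌉`.  Take `n_{i j₀} = t − 1` in the distinguished row `j₀` for
every column `i`, row sums `n`, and the remaining entries in each column as equal
as possible.  Then the construction has multipartite minimum degree at least
`(1 − 1/χ_cr(H))·n − 1 = (1 − (1−σ)/(r−1))·n − 1`, every `H`-tiling has fewer than
`rn/h` copies, and in particular there is no perfect `H`-tiling. -/
theorem stmt12 {VH : Type*} [Fintype VH] (H : SimpleGraph VH) (r h n : ℕ)
    (hr : 3 ≤ r) (hn : 0 < n) (hcard : Fintype.card VH = h)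
    (hchrom : H.chromaticNumber = (r : ℕ∞))
    (t : ℕ) (ht : (t : ℤ) = ⌈sigmaH VH H r * (n : ℝ)⌉) (ht1 : 1 ≤ t)
    (j₀ : Fin r) (nij : Fin r → Fin r → ℕ)
    (hrow : ∀ i : Fin r, nij i j₀ = t - 1)
    (hsum : ∀ i : Fin r, ∑ j : Fin r, nij i j = n)
    (hbal : ∀ (i : Fin r) (j j' : Fin r), j ≠ j₀ → j' ≠ j₀ → nij i j ≤ nij i j' + 1) :
    (∀ u : (Σ i : Fin r, Σ j : Fin r, Fin (nij i j)), ∀ i' : Fin r, i' ≠ u.1 →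
      (1 - (1 - sigmaH VH H r) / ((r : ℝ) - 1)) * n - 1 ≤
        (Set.ncard {v : (Σ i : Fin r, Σ j : Fin r, Fin (nij i j)) |
          (rcGraph r nij).Adj u v ∧ v.1 = i'} : ℝ)) ∧
    (∀ (m : ℕ) (F : Fin m → VH → (Σ i : Fin r, Σ j : Fin r, Fin (nij i j))),
      IsHTiling H (rcGraph r nij) F → (m : ℝ) < (r : ℝ) * n / h) ∧
    ¬ HasPerfectTiling H (rcGraph r nij) :=
  stmt12_general H r h n hr hcard hchrom t ht ht1 j₀ nij hrow hsum hbal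
end

section
/- Assuming the almost-perfect tiling theorem (for every graph H with χ(H) = r ≥ 3 and every α > 0 there are n_0 and C such that every balanced r-partite G on rn vertices, n ≥ n_0, with δ*(G) ≥ (1 − 1/χ_cr(H) + α)n admits an H-tiling covering all but at most C vertices), deduce: for every ψ > 0 there exists n_0 such that every balanced r-partite graph G on rn vertices with n ≥ n_0 and δ*(G) ≥ (1 − 1/χ_cr(H))·n admits an H-tiling covering all but at most ψn vertices. (The deduction adds m = 2kαn universally-joined dummy vertices to each class, where k = χ_cr(H) and α = ψ/(2rkh).) -/
/-- The critical chromatic number `χ_cr(H) = (r − 1)/(1 − σ(H))`. -/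
noncomputable def chiCr (V : Type*) [Fintype V] (H : SimpleGraph V) (r : ℕ) : ℝ :=
  ((r : ℝ) - 1) / (1 - sigmaH V H r)

/-!
Pad each class of `G` with `m ≈ εn` dummy vertices joined to everything outside their class.
This raises `δ*` by `m` while the class size grows only to `n + m`, so the padded graph satisfies
the degree condition of the almost-perfect tiling theorem with the margin `α = bε/(1 + ε)`,
where `b = 1/χ_cr(H) > 0` (because `σ(H) ≤ 1/r`). Copies of `H` in the resulting tiling are
vertex-disjoint, so at most `rm` of them meet a dummy vertex; the others tile `G`, and the loss of
at most `rmh + C ≤ ψn` vertices is affordable once `ε` is small and `n` large.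
-/
open Function Finset

lemma sigmaH_le_inv {V : Type*} [Fintype V] (H : SimpleGraph V) {r : ℕ} (hr : 0 < r)
    (hH : H.Colorable r) : sigmaH V H r ≤ 1 / r := by
  classical
  obtain ⟨c⟩ := hH
  have : Nonempty (Fin r) := ⟨⟨0, hr⟩⟩
  obtain ⟨i, hi⟩ := Fintype.exists_card_fiber_le_of_card_le_nsmul (f := fun v => c v)
    (b := (Fintype.card V : ℝ) / r) (by simp [nsmul_eq_mul]; field_simp; rfl)
  calc sigmaH V H r ≤ (Set.ncard {v | c v = i} : ℝ) / Fintype.card V := by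
        refine csInf_le ⟨0, ?_⟩ ⟨fun v => c v, fun u v huv => c.valid huv, i, rfl⟩
        rintro x ⟨c', -, j, rfl⟩
        positivity
    _ ≤ (Fintype.card V / r) / Fintype.card V := by
        gcongr
        simpa [Set.ncard_eq_toFinset_card'] using hi
    _ = 1 / r * (Fintype.card V / Fintype.card V) := by ring
    _ ≤ 1 / r := mul_le_of_le_one_right (by positivity) (div_self_le_one _)

lemma inv_chiCr_pos {V : Type*} [Fintype V] (H : SimpleGraph V) {r : ℕ} (hr : 2 ≤ r)
    (hH : H.Colorable r) : 0 < 1 / chiCr V H r := by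
  have hσ := sigmaH_le_inv H (by omega) hH
  have hr' : (2 : ℝ) ≤ r := by exact_mod_cast hr
  have : (1 : ℝ) / r < 1 := by rw [div_lt_one] <;> linarith
  rw [chiCr, one_div_div]
  apply div_pos <;> linarith

namespace IsHTiling

variable {VH V W : Type*} {H : SimpleGraph VH} {G : SimpleGraph V} {G' : SimpleGraph W}

lemma comp_injective {m k : ℕ} {F : Fin m → VH → W} (hF : IsHTiling H G' F)
    {σ : Fin k → Fin m} (hσ : Injective σ) : IsHTiling H G' fun j => F (σ j) :=
  ⟨fun j => hF.1 (σ j), fun _ _ _ _ h =>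
    have ⟨hj, hu⟩ := hF.2 _ _ _ _ h
    ⟨hσ hj, hu⟩⟩

lemma of_comp {m : ℕ} {F : Fin m → VH → V} {e : V → W}
    (he : ∀ u v, G'.Adj (e u) (e v) → G.Adj u v) (hF : IsHTiling H G' fun j u => e (F j u)) :
    IsHTiling H G F :=
  ⟨fun j u v huv => he _ _ (hF.1 j u v huv), fun _ _ _ _ h => hF.2 _ _ _ _ (congrArg e h)⟩

open Classical in
/-- Disjoint copies meeting the complement of `range e` each use one of its `|W| - |V|`
vertices. -/
lemma card_add_card_le [Fintype VH] [Fintype V] [Fintype W] {m : ℕ} {F : Fin m → VH → W}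
    (hF : IsHTiling H G' F) {e : V → W} (he : Injective e) :
    m + Fintype.card V ≤ #{j | ∀ u, F j u ∈ Set.range e} + Fintype.card W := by
  set P : Finset (Fin m × VH) := {p | F p.1 p.2 ∉ Set.range e}
  have hbad : #{j | ¬ ∀ u, F j u ∈ Set.range e} ≤ #P := by
    refine le_trans (Finset.card_le_card fun j hj => ?_) (Finset.card_image_le (f := Prod.fst))
    obtain ⟨u, hu⟩ := not_forall.mp (Finset.mem_filter.mp hj).2
    exact Finset.mem_image.mpr ⟨(j, u), by simpa [P] using hu, rfl⟩
  have hP : #P ≤ #(univ.image e)ᶜ :=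
    Finset.card_le_card_of_injOn (fun p => F p.1 p.2)
      (fun p hp => by simpa [P] using hp)
      (fun p _ q _ h => Prod.ext (hF.2 _ _ _ _ h).1 (hF.2 _ _ _ _ h).2)
  have hcompl : #(univ.image e)ᶜ + Fintype.card V = Fintype.card W := by
    rw [Finset.card_compl, Finset.card_image_of_injective _ he, Finset.card_univ,
      Nat.sub_add_cancel (Fintype.card_le_of_injective e he)]
  have hsplit := Finset.card_filter_add_card_filter_not (s := univ) fun j : Fin m =>
    ∀ u, F j u ∈ Set.range e
  rw [Finset.card_univ, Fintype.card_fin] at hsplit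
  omega

lemma exists_restrict [Fintype VH] [Fintype V] [Fintype W] {m : ℕ} {F : Fin m → VH → W}
    (hF : IsHTiling H G' F) {e : V → W} (he : Injective e)
    (hadj : ∀ u v, G'.Adj (e u) (e v) → G.Adj u v) :
    ∃ (k : ℕ) (F' : Fin k → VH → V), IsHTiling H G F' ∧
      m + Fintype.card V ≤ k + Fintype.card W := by
  classical
  set good : Finset (Fin m) := {j | ∀ u, F j u ∈ Set.range e}
  set σ : Fin #good → Fin m := fun i => (good.equivFin.symm i).1
  have hσ : Injective σ := Subtype.val_injective.comp good.equivFin.symm.injective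
  have hσgood (i) (u) : F (σ i) u ∈ Set.range e :=
    (Finset.mem_filter.mp (good.equivFin.symm i).2).2 u
  refine ⟨#good, fun i u => (Equiv.ofInjective e he).symm ⟨F (σ i) u, hσgood i u⟩,
    of_comp hadj ?_, hF.card_add_card_le he⟩
  simpa only [Equiv.apply_ofInjective_symm] using hF.comp_injective hσ

end IsHTiling

lemma Fin.ncard_setOf_add {n m : ℕ} (p : Fin (n + m) → Prop) :
    {y | p y}.ncard =
      {a : Fin n | p (Fin.castAdd m a)}.ncard + {k : Fin m | p (Fin.natAdd n k)}.ncard := by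
  classical
  simp only [Set.ncard_eq_toFinset_card', Set.toFinset_ofPred, Finset.card_filter,
    Fin.sum_univ_add]

/-- The indices `Fin.natAdd n k` are the dummies: the condition on `G` is vacuous for them. -/
def addDummies {r n : ℕ} (G : SimpleGraph (Fin r × Fin n)) (m : ℕ) :
    SimpleGraph (Fin r × Fin (n + m)) where
  Adj u v := u.1 ≠ v.1 ∧
    ∀ a b, u.2 = Fin.castAdd m a → v.2 = Fin.castAdd m b → G.Adj (u.1, a) (v.1, b)
  symm := ⟨fun _ _ h => ⟨h.1.symm, fun a b ha hb => (h.2 b a hb ha).symm⟩⟩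
  loopless := ⟨fun _ h => h.1 rfl⟩

section addDummies

variable {r n : ℕ} (G : SimpleGraph (Fin r × Fin n)) (m : ℕ)

lemma addDummies_adj_castAdd {i j : Fin r} {a b : Fin n} :
    (addDummies G m).Adj (i, Fin.castAdd m a) (j, Fin.castAdd m b) ↔
      i ≠ j ∧ G.Adj (i, a) (j, b) := by
  simp [addDummies]

lemma addDummies_adj_natAdd {u : Fin r × Fin (n + m)} {j : Fin r} {k : Fin m} :
    (addDummies G m).Adj u (j, Fin.natAdd n k) ↔ u.1 ≠ j := by
  simp only [addDummies, Fin.ext_iff, Fin.val_natAdd, Fin.val_castAdd]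
  exact and_iff_left fun _ _ _ hb => absurd hb (by omega)

lemma addDummies_natAdd_adj {i : Fin r} {k : Fin m} {v : Fin r × Fin (n + m)} :
    (addDummies G m).Adj (i, Fin.natAdd n k) v ↔ i ≠ v.1 := by
  rw [SimpleGraph.adj_comm, addDummies_adj_natAdd, ne_comm]

lemma addDummies_ncard_adj_ge {δ : ℝ} (hδn : δ ≤ n)
    (hδ : ∀ (u : Fin r × Fin n) (j : Fin r), j ≠ u.1 → δ ≤ {y | G.Adj u (j, y)}.ncard)
    (u : Fin r × Fin (n + m)) (j : Fin r) (hj : j ≠ u.1) :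
    δ + m ≤ {y | (addDummies G m).Adj u (j, y)}.ncard := by
  obtain ⟨i, x⟩ := u
  rw [Fin.ncard_setOf_add]
  simp only [addDummies_adj_natAdd, ne_eq, hj.symm, not_false_eq_true, Set.ofPred_true,
    Set.ncard_univ, Nat.card_eq_fintype_card, Fintype.card_fin, Nat.cast_add]
  gcongr
  induction x using Fin.addCases with
  | left a => simpa [addDummies_adj_castAdd, Ne.symm hj] using hδ (i, a) j hj
  | right k => simpa [addDummies_natAdd_adj, Ne.symm hj] using hδn

end addDummies

lemma one_sub_add_mul_add_le {b ε x y : ℝ} (hb : 0 ≤ b) (hε : 0 ≤ ε) (hxy : ε * x ≤ y) :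
    (1 - b + b * ε / (1 + ε)) * (x + y) ≤ (1 - b) * x + y := by
  have key : b * ε / (1 + ε) * (x + y) ≤ b * y := by
    rw [div_mul_eq_mul_div, div_le_iff₀ (by positivity)]
    nlinarith [mul_le_mul_of_nonneg_left hxy hb]
  linarith

lemma mul_add_le_of_le_div {ψ : ℝ} {k C n m : ℕ} (hψ : 0 < ψ)
    (hm : (m : ℝ) ≤ ψ / (2 * (k + 1)) * n + 1) (hn : 2 * ((k : ℝ) + C) ≤ ψ * n) :
    (k : ℝ) * m + C ≤ ψ * n := by
  have hk : (k : ℝ) * (ψ / (2 * (k + 1))) ≤ ψ / 2 := by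
    rw [mul_div_assoc', div_le_div_iff₀ (by positivity) two_pos]
    nlinarith
  nlinarith [mul_le_mul_of_nonneg_left hm (Nat.cast_nonneg k : (0 : ℝ) ≤ k),
    mul_le_mul_of_nonneg_right hk (Nat.cast_nonneg n : (0 : ℝ) ≤ n)]

theorem stmt13_general {VH : Type*} [Fintype VH] (H : SimpleGraph VH) (r h : ℕ)
    (hr : 3 ≤ r)
    (hchrom : H.chromaticNumber = (r : ℕ∞))
    (hyp : ∀ α : ℝ, 0 < α → ∃ n₀ C : ℕ, ∀ n : ℕ, n₀ ≤ n →
      ∀ G : SimpleGraph (Fin r × Fin n),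
        (∀ u v : Fin r × Fin n, G.Adj u v → u.1 ≠ v.1) →
        (∀ (u : Fin r × Fin n) (j : Fin r), j ≠ u.1 →
          (1 - 1 / chiCr VH H r + α) * n ≤
            (Set.ncard {y : Fin n | G.Adj u (j, y)} : ℝ)) →
        ∃ (m : ℕ) (F : Fin m → VH → Fin r × Fin n),
          IsHTiling H G F ∧ r * n ≤ m * h + C) :
    ∀ ψ : ℝ, 0 < ψ → ∃ n₀ : ℕ, ∀ n : ℕ, n₀ ≤ n →
      ∀ G : SimpleGraph (Fin r × Fin n),
        (∀ u v : Fin r × Fin n, G.Adj u v → u.1 ≠ v.1) →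
        (∀ (u : Fin r × Fin n) (j : Fin r), j ≠ u.1 →
          (1 - 1 / chiCr VH H r) * n ≤
            (Set.ncard {y : Fin n | G.Adj u (j, y)} : ℝ)) →
        ∃ (m : ℕ) (F : Fin m → VH → Fin r × Fin n),
          IsHTiling H G F ∧ ((r : ℝ) * n ≤ m * h + ψ * n) := by
  intro ψ hψ
  have hb : 0 < 1 / chiCr VH H r := inv_chiCr_pos H (by omega)
    (SimpleGraph.chromaticNumber_le_iff_colorable.mp hchrom.le)
  set b := 1 / chiCr VH H r
  set ε : ℝ := ψ / (2 * (r * h + 1))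
  have hε : 0 < ε := by positivity
  obtain ⟨n₁, C, htile⟩ := hyp (b * ε / (1 + ε)) (by positivity)
  refine ⟨max n₁ ⌈2 * (r * h + C) / ψ⌉₊, fun n hn G _ hδ => ?_⟩
  set m := ⌈ε * n⌉₊
  have hδpad := addDummies_ncard_adj_ge G m (δ := (1 - b) * n) (by nlinarith) hδ
  obtain ⟨M, F, hF, hcover⟩ := htile (n + m) (by omega) (addDummies G m)
    (fun _ _ huv => huv.1) fun u j hj => by
      push_cast
      exact (one_sub_add_mul_add_le hb.le hε.le (Nat.le_ceil _)).trans (hδpad u j hj)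
  obtain ⟨k, F', hF', hk⟩ := hF.exists_restrict (e := Prod.map id (Fin.castAdd m))
    (injective_id.prodMap (Fin.castAdd_injective n m))
    fun _ _ huv => ((addDummies_adj_castAdd G m).1 huv).2
  refine ⟨k, F', hF', ?_⟩
  simp only [Fintype.card_prod, Fintype.card_fin] at hk
  have hcount : r * n ≤ k * h + r * h * m + C := by nlinarith
  have hloss := mul_add_le_of_le_div (k := r * h) (C := C) hψ (m := m)
    (by push_cast; exact (Nat.ceil_lt_add_one (by positivity)).le)
    (by rw [← div_le_iff₀' hψ]; push_cast; exact Nat.ceil_le.mp (le_of_max_le_right hn))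
  have hcountR : (r * n : ℝ) ≤ k * h + r * h * m + C := by exact_mod_cast hcount
  push_cast at hloss
  linarith

/-- Assuming the almost-perfect tiling theorem for `H` (on `h` vertices, with
`χ(H) = r ≥ 3`): for every `α > 0` there are `n₀, C` such that every balanced
`r`-partite `G` on `rn` vertices with `n ≥ n₀` and `δ*(G) ≥ (1 − 1/χ_cr(H) + α)n`
has an `H`-tiling covering all but at most `C` vertices.  Deduce: for every `ψ > 0`
there is `n₀` such that every balanced `r`-partite `G` on `rn` vertices with
`n ≥ n₀` and `δ*(G) ≥ (1 − 1/χ_cr(H))n` has an `H`-tiling covering all but at most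
`ψn` vertices. -/
theorem stmt13 {VH : Type*} [Fintype VH] (H : SimpleGraph VH) (r h : ℕ)
    (hr : 3 ≤ r) (hcard : Fintype.card VH = h)
    (hchrom : H.chromaticNumber = (r : ℕ∞))
    (hyp : ∀ α : ℝ, 0 < α → ∃ n₀ C : ℕ, ∀ n : ℕ, n₀ ≤ n →
      ∀ G : SimpleGraph (Fin r × Fin n),
        (∀ u v : Fin r × Fin n, G.Adj u v → u.1 ≠ v.1) →
        (∀ (u : Fin r × Fin n) (j : Fin r), j ≠ u.1 →
          (1 - 1 / chiCr VH H r + α) * n ≤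
            (Set.ncard {y : Fin n | G.Adj u (j, y)} : ℝ)) →
        ∃ (m : ℕ) (F : Fin m → VH → Fin r × Fin n),
          IsHTiling H G F ∧ r * n ≤ m * h + C) :
    ∀ ψ : ℝ, 0 < ψ → ∃ n₀ : ℕ, ∀ n : ℕ, n₀ ≤ n →
      ∀ G : SimpleGraph (Fin r × Fin n),
        (∀ u v : Fin r × Fin n, G.Adj u v → u.1 ≠ v.1) →
        (∀ (u : Fin r × Fin n) (j : Fin r), j ≠ u.1 →
          (1 - 1 / chiCr VH H r) * n ≤
            (Set.ncard {y : Fin n | G.Adj u (j, y)} : ℝ)) →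
        ∃ (m : ℕ) (F : Fin m → VH → Fin r × Fin n),
          IsHTiling H G F ∧ ((r : ℝ) * n ≤ m * h + ψ * n) :=
  stmt13_general H r h hr hchrom hyp
end
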